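/- arXiv:1903.05804 — 7 statements merged into one kernel-verified Lean document; each statement's English description precedes it below -/
import Mathlib

section
/- Fix reals T, B, L, N0 > 0 and c > 0, set k = (L/(B·T))·ln 2, and define σ(γ) = c²·γ·(γ+2) / ( (ln(1+γ) − k)²·(1+γ)²·B·T ) for γ in Γ = (2^{L/(B·T)} − 1, ∞). Then σ is strictly antitone on Γ: for all γ1, γ2 ∈ Γ with γ1 < γ2 one has σ(γ2) < σ(γ1). Consequently, writing Π(γ) = N0·B·σ(γ)·γ for the corresponding transmit power, the power per packet Π(γ)/σ(γ) = N0·B·γ strictly decreases as the number of packets σ(γ) increases: for γ1 < γ2 in Γ, σ(γ2) < σ(γ1) and Π(γ2)/σ(γ2) > Π(γ1)/σ(γ1). -/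
/-!
Substituting `x = 1 + γ` turns `γ (γ + 2)` into `x² - 1`, so `σ(γ)` is the positive constant
`c² / (B T)` times `g(x) = (1 - x⁻²) / (log x - k)²`, and `Γ` becomes `x > 2^{L/(BT)} = exp k`.
The derivative of `g` is `2 ((log x - k) - (x² - 1)) / (x³ (log x - k)³)`, which is negative there
because `0 < log x - k ≤ log x < x - 1 < x² - 1`. The power per packet is just `N0 B γ`.
-/

open Real Set

lemma log_sub_pos_of_exp_lt {k x : ℝ} (hx : exp k < x) : 0 < log x - k :=
  sub_pos.2 ((lt_log_iff_exp_lt ((exp_pos k).trans hx)).2 hx)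

lemma log_sub_lt_sq_sub_one_of_exp_lt {k x : ℝ} (hk : 0 ≤ k) (hx : exp k < x) :
    log x - k < x ^ 2 - 1 := by
  have hx1 : 1 < x := (one_le_exp hk).trans_lt hx
  have hlog : log x < x - 1 := log_lt_sub_one_of_pos (by linarith) hx1.ne'
  nlinarith

lemma hasDerivAt_one_sub_inv_sq_div_sq_log_sub {k x : ℝ} (hx : x ≠ 0) (ht : log x - k ≠ 0) :
    HasDerivAt (fun y => (1 - (y ^ 2)⁻¹) / (log y - k) ^ 2)
      (2 * ((log x - k) - (x ^ 2 - 1)) / (x ^ 3 * (log x - k) ^ 3)) x := by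
  have hnum : HasDerivAt (fun y : ℝ => 1 - (y ^ 2)⁻¹) (2 * x / (x ^ 2) ^ 2) x := by
    simpa [neg_div] using ((hasDerivAt_pow 2 x).fun_inv (pow_ne_zero 2 hx)).const_sub 1
  have hden : HasDerivAt (fun y : ℝ => (log y - k) ^ 2) (2 * (log x - k) * x⁻¹) x := by
    simpa using ((hasDerivAt_log hx).sub_const k).fun_pow 2
  refine (hnum.div hden (pow_ne_zero 2 ht)).congr_deriv ?_
  field_simp

lemma strictAntiOn_one_sub_inv_sq_div_sq_log_sub {k : ℝ} (hk : 0 ≤ k) :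
    StrictAntiOn (fun x => (1 - (x ^ 2)⁻¹) / (log x - k) ^ 2) (Ioi (exp k)) := by
  have hderiv : ∀ x ∈ Ioi (exp k), HasDerivAt (fun y => (1 - (y ^ 2)⁻¹) / (log y - k) ^ 2)
      (2 * ((log x - k) - (x ^ 2 - 1)) / (x ^ 3 * (log x - k) ^ 3)) x := fun x hx =>
    hasDerivAt_one_sub_inv_sq_div_sq_log_sub ((exp_pos k).trans hx).ne'
      (log_sub_pos_of_exp_lt hx).ne'
  refine strictAntiOn_of_deriv_neg (convex_Ioi _)
    (fun x hx => (hderiv x hx).continuousAt.continuousWithinAt) fun x hx => ?_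
  rw [interior_Ioi] at hx
  have hx0 : 0 < x := (exp_pos k).trans hx
  have ht : 0 < log x - k := log_sub_pos_of_exp_lt hx
  rw [(hderiv x hx).deriv]
  exact div_neg_of_neg_of_pos (by linarith [log_sub_lt_sq_sub_one_of_exp_lt hk hx])
    (by positivity)

/-- The packets-per-slot function `σ` is strictly antitone on
`Γ = (2^{L/(B·T)} − 1, ∞)`, and the power per packet `Pw(γ)/σ(γ) = N0·B·γ` strictly
increases in `γ`, i.e. it strictly decreases as the number of packets `σ(γ)` increases.
(`Pw` plays the role of `Π` in the paper.) -/
theorem sigma_strict_antitone_power_per_packet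
    (T B L N0 c k : ℝ)
    (hT : 0 < T) (hB : 0 < B) (hL : 0 < L) (hN0 : 0 < N0) (hc : 0 < c)
    (hk : k = (L / (B * T)) * Real.log 2)
    (σ Pw : ℝ → ℝ)
    (hσ : ∀ γ, σ γ = c ^ 2 * γ * (γ + 2) /
        ((Real.log (1 + γ) - k) ^ 2 * (1 + γ) ^ 2 * B * T))
    (hPw : ∀ γ, Pw γ = N0 * B * σ γ * γ) :
    ∀ γ1 γ2 : ℝ, (2 : ℝ) ^ (L / (B * T)) - 1 < γ1 →
      (2 : ℝ) ^ (L / (B * T)) - 1 < γ2 → γ1 < γ2 →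
      σ γ2 < σ γ1 ∧ Pw γ1 / σ γ1 < Pw γ2 / σ γ2 := by
  intro γ1 γ2 h1 h2 h12
  have hk0 : 0 ≤ k := hk ▸ by positivity
  rw [rpow_def_of_pos two_pos, mul_comm, ← hk] at h1 h2
  have hσ_eq : ∀ γ, exp k - 1 < γ →
      σ γ = c ^ 2 / (B * T) * ((1 - ((1 + γ) ^ 2)⁻¹) / (log (1 + γ) - k) ^ 2) := by
    intro γ hγ
    have : 0 < 1 + γ := by linarith [exp_pos k]
    have : 0 < log (1 + γ) - k := log_sub_pos_of_exp_lt (by linarith)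
    rw [hσ]
    field_simp
    ring
  have hσ_pos : ∀ γ, exp k - 1 < γ → 0 < σ γ := fun γ hγ => by
    have : 0 < γ := by linarith [one_le_exp hk0]
    have : 0 < log (1 + γ) - k := log_sub_pos_of_exp_lt (by linarith)
    rw [hσ]
    positivity
  have hPw_div : ∀ γ, exp k - 1 < γ → Pw γ / σ γ = N0 * B * γ := fun γ hγ => by
    rw [hPw, mul_right_comm, mul_div_cancel_right₀ _ (hσ_pos γ hγ).ne']
  constructor
  · rw [hσ_eq γ1 h1, hσ_eq γ2 h2]
    exact mul_lt_mul_of_pos_left (strictAntiOn_one_sub_inv_sq_div_sq_log_sub hk0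
      (by rw [mem_Ioi]; linarith) (by rw [mem_Ioi]; linarith) (by linarith)) (by positivity)
  · rw [hPw_div γ1 h1, hPw_div γ2 h2]
    exact mul_lt_mul_of_pos_left h12 (by positivity)
end

section
/- Fix reals T, B, L, N0 > 0 and c > 0, set k = (L/(B·T))·ln 2, and on Γ = (2^{L/(B·T)} − 1, ∞) define σ(γ) = c²·γ·(γ+2) / ( (ln(1+γ) − k)²·(1+γ)²·B·T ) and Π(γ) = N0·B·σ(γ)·γ. Then there exists γ* ∈ Γ such that the power–versus–packets curve s ↦ P traced parametrically by γ ↦ (σ(γ), Π(γ)) is concave for s ≥ σ(γ*) and convex for 0 < s ≤ σ(γ*); precisely: (i) for all γa, γm, γb ∈ Γ with γa < γm < γb ≤ γ*, Π(γm) ≥ Π(γb) + ((σ(γm) − σ(γb))/(σ(γa) − σ(γb)))·(Π(γa) − Π(γb)); and (ii) for all γa, γm, γb ∈ Γ with γ* ≤ γb < γm < γa, Π(γm) ≤ Π(γb) + ((σ(γm) − σ(γb))/(σ(γa) − σ(γb)))·(Π(γa) − Π(γb)). (Here σ is strictly antitone on Γ, so larger γ corresponds to smaller s, and σ(γ*)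 = s* is the unique inflection point of P(s).) -/
/-!
Write `x = 1 + γ` and `u = log x - k`, so that `u > 0` on `Γ`. Since `σ` is strictly decreasing
on `Γ`, both chord inequalities follow from the Cauchy mean value theorem once the slope
`dP/ds = Π'/σ' = N0·B·(γ + σ/σ')` is known to increase in `γ` up to `γ*` and to decrease after
it. The `γ`-derivative of this slope has the sign of
`φ(x) = (3x² + 1)u² - (x⁴ + 2x² - 3)u + (x² - 1)²`, which is positive at `x = e^k` (where
`u = 0`), negative at `x = e^(k+2)`, and strictly decreasing wherever it is `≤ 0`; so `φ`
changes sign exactly once, at `x = 1 + γ*`.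
-/

open Set Real

section Secant

variable {f g g' m : ℝ → ℝ}

theorem exists_sub_eq_sub_mul_of_hasDerivAt {a b : ℝ} (hab : a < b)
    (hg : ∀ x ∈ Icc a b, HasDerivAt g (g' x) x) (hg' : ∀ x ∈ Ioo a b, g' x ≠ 0)
    (hf : ∀ x ∈ Icc a b, HasDerivAt f (m x * g' x) x) :
    ∃ ξ ∈ Ioo a b, f b - f a = (g b - g a) * m ξ := by
  obtain ⟨ξ, hξ, h⟩ := exists_ratio_hasDerivAt_eq_ratio_slope f (fun x => m x * g' x) hab
    (fun x hx => (hf x hx).continuousAt.continuousWithinAt)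
    (fun x hx => hf x (Ioo_subset_Icc_self hx)) g g'
    (fun x hx => (hg x hx).continuousAt.continuousWithinAt)
    (fun x hx => hg x (Ioo_subset_Icc_self hx))
  exact ⟨ξ, hξ, mul_right_cancel₀ (hg' ξ hξ) (by linear_combination -h)⟩

theorem sub_secant_eq {fa ft fb ga gt gb μ₁ μ₂ : ℝ} (h₁ : ft - fa = (gt - ga) * μ₁)
    (h₂ : fb - ft = (gb - gt) * μ₂) (hab : ga ≠ gb) :
    ft - (fb + (gt - gb) / (ga - gb) * (fa - fb)) =
      (gt - ga) * (gb - gt) * (μ₂ - μ₁) / (ga - gb) := by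
  field_simp [sub_ne_zero.2 hab]
  linear_combination (gt - gb) * h₁ + (gt - ga) * h₂

theorem strictAntiOn_Icc_of_hasDerivAt_neg {a b : ℝ}
    (hg : ∀ x ∈ Icc a b, HasDerivAt g (g' x) x) (hg' : ∀ x ∈ Icc a b, g' x < 0) :
    StrictAntiOn g (Icc a b) := by
  refine strictAntiOn_of_hasDerivWithinAt_neg (f' := g') (convex_Icc a b)
    (fun x hx => (hg x hx).continuousAt.continuousWithinAt) (fun x hx => ?_) (fun x hx => ?_)
  all_goals rw [interior_Icc] at hx
  · exact (hg x (Ioo_subset_Icc_self hx)).hasDerivWithinAt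
  · exact hg' x (Ioo_subset_Icc_self hx)

theorem secant_le_of_monotoneOn {a t b : ℝ} (hat : a < t) (htb : t < b)
    (hg : ∀ x ∈ Icc a b, HasDerivAt g (g' x) x) (hg' : ∀ x ∈ Icc a b, g' x < 0)
    (hf : ∀ x ∈ Icc a b, HasDerivAt f (m x * g' x) x) (hm : MonotoneOn m (Icc a b)) :
    f b + (g t - g b) / (g a - g b) * (f a - f b) ≤ f t := by
  have hl : Icc a t ⊆ Icc a b := Icc_subset_Icc le_rfl htb.le
  have hr : Icc t b ⊆ Icc a b := Icc_subset_Icc hat.le le_rfl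
  obtain ⟨ξ₁, hξ₁, h₁⟩ := exists_sub_eq_sub_mul_of_hasDerivAt hat (fun x hx => hg x (hl hx))
    (fun x hx => (hg' x (hl (Ioo_subset_Icc_self hx))).ne) (fun x hx => hf x (hl hx))
  obtain ⟨ξ₂, hξ₂, h₂⟩ := exists_sub_eq_sub_mul_of_hasDerivAt htb (fun x hx => hg x (hr hx))
    (fun x hx => (hg' x (hr (Ioo_subset_Icc_self hx))).ne) (fun x hx => hf x (hr hx))
  have hμ : m ξ₁ ≤ m ξ₂ :=
    hm (hl (Ioo_subset_Icc_self hξ₁)) (hr (Ioo_subset_Icc_self hξ₂)) (hξ₁.2.trans hξ₂.1).le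
  have hanti := strictAntiOn_Icc_of_hasDerivAt_neg hg hg'
  have hga : g t < g a := hanti ⟨le_rfl, (hat.trans htb).le⟩ ⟨hat.le, htb.le⟩ hat
  have hgb : g b < g t := hanti ⟨hat.le, htb.le⟩ ⟨(hat.trans htb).le, le_rfl⟩ htb
  rw [← sub_nonneg, sub_secant_eq h₁ h₂ (by linarith)]
  exact div_nonneg (mul_nonneg (mul_nonneg_of_nonpos_of_nonpos (by linarith) (by linarith))
    (by linarith)) (by linarith)

theorem le_secant_of_antitoneOn {b t a : ℝ} (hbt : b < t) (hta : t < a)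
    (hg : ∀ x ∈ Icc b a, HasDerivAt g (g' x) x) (hg' : ∀ x ∈ Icc b a, g' x < 0)
    (hf : ∀ x ∈ Icc b a, HasDerivAt f (m x * g' x) x) (hm : AntitoneOn m (Icc b a)) :
    f t ≤ f b + (g t - g b) / (g a - g b) * (f a - f b) := by
  have hl : Icc b t ⊆ Icc b a := Icc_subset_Icc le_rfl hta.le
  have hr : Icc t a ⊆ Icc b a := Icc_subset_Icc hbt.le le_rfl
  obtain ⟨ξ₂, hξ₂, h₂⟩ := exists_sub_eq_sub_mul_of_hasDerivAt hbt (fun x hx => hg x (hl hx))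
    (fun x hx => (hg' x (hl (Ioo_subset_Icc_self hx))).ne) (fun x hx => hf x (hl hx))
  obtain ⟨ξ₁, hξ₁, h₁⟩ := exists_sub_eq_sub_mul_of_hasDerivAt hta (fun x hx => hg x (hr hx))
    (fun x hx => (hg' x (hr (Ioo_subset_Icc_self hx))).ne) (fun x hx => hf x (hr hx))
  have hμ : m ξ₁ ≤ m ξ₂ :=
    hm (hl (Ioo_subset_Icc_self hξ₂)) (hr (Ioo_subset_Icc_self hξ₁)) (hξ₂.2.trans hξ₁.1).le
  have hanti := strictAntiOn_Icc_of_hasDerivAt_neg hg hg'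
  have hgb : g t < g b := hanti ⟨le_rfl, (hbt.trans hta).le⟩ ⟨hbt.le, hta.le⟩ hbt
  have hga : g a < g t := hanti ⟨hbt.le, hta.le⟩ ⟨(hbt.trans hta).le, le_rfl⟩ hta
  have h₁' : f t - f a = (g t - g a) * m ξ₁ := by linear_combination -h₁
  have h₂' : f b - f t = (g b - g t) * m ξ₂ := by linear_combination -h₂
  rw [← sub_nonpos, sub_secant_eq h₁' h₂' (by linarith)]
  exact div_nonpos_of_nonneg_of_nonpos (mul_nonneg (mul_nonneg (by linarith) (by linarith))
    (by linarith)) (by linarith)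

end Secant

section SignChange

variable {f f' : ℝ → ℝ}

theorem nonpos_of_hasDerivAt_neg_of_eq_zero {a : ℝ} (hf : ∀ x ∈ Ici a, HasDerivAt f (f' x) x)
    (hf' : ∀ x ∈ Ici a, f x = 0 → f' x < 0) (ha : f a ≤ 0) : ∀ x ∈ Ici a, f x ≤ 0 :=
  fun _ hx => image_le_of_deriv_right_lt_deriv_boundary (B := fun _ => 0) (B' := fun _ => 0)
    (fun y hy => (hf y hy.1).continuousAt.continuousWithinAt)
    (fun y hy => (hf y hy.1).hasDerivWithinAt) ha (fun _ => hasDerivAt_const _ _)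
    (fun y hy => hf' y hy.1) ⟨hx, le_rfl⟩

theorem exists_pos_on_Ioo_nonpos_on_Ici {a b : ℝ} (hf : ∀ x ∈ Ici a, HasDerivAt f (f' x) x)
    (hf' : ∀ x ∈ Ici a, f x = 0 → f' x < 0) (ha : 0 < f a) (hab : a ≤ b) (hb : f b ≤ 0) :
    ∃ c, a < c ∧ (∀ x ∈ Ioo a c, 0 < f x) ∧ ∀ x ∈ Ici c, f x ≤ 0 := by
  set S := Ici a ∩ f ⁻¹' Iic 0
  have hS : IsClosed S := ContinuousOn.preimage_isClosed_of_isClosed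
    (fun x hx => (hf x hx).continuousAt.continuousWithinAt) isClosed_Ici isClosed_Iic
  have hbdd : BddBelow S := ⟨a, fun x hx => hx.1⟩
  obtain ⟨hca, hc⟩ : sInf S ∈ S := hS.csInf_mem ⟨b, hab, hb⟩ hbdd
  refine ⟨sInf S, hca.lt_of_ne fun h => (h ▸ ha).not_ge hc, fun x hx => ?_, ?_⟩
  · by_contra! h
    exact (csInf_le hbdd ⟨hx.1.le, h⟩).not_gt hx.2
  · exact nonpos_of_hasDerivAt_neg_of_eq_zero (fun x hx => hf x (mem_Ici.2 (hca.trans hx)))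
      (fun x hx => hf' x (mem_Ici.2 (hca.trans hx))) hc

end SignChange

namespace PacketPower

noncomputable def phi (k x : ℝ) : ℝ :=
  (3 * x ^ 2 + 1) * (log x - k) ^ 2 - (x ^ 4 + 2 * x ^ 2 - 3) * (log x - k) + (x ^ 2 - 1) ^ 2

noncomputable def psi (k x : ℝ) : ℝ :=
  6 * x ^ 2 * (log x - k) ^ 2 - 2 * (x ^ 2 - 1) * (2 * x ^ 2 + 1) * (log x - k) +
    3 * (x ^ 2 - 1) ^ 2

theorem hasDerivAt_phi (k : ℝ) {x : ℝ} (hx : x ≠ 0) : HasDerivAt (phi k) (psi k x / x) x := by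
  have hu : HasDerivAt (fun x => log x - k) x⁻¹ x := (hasDerivAt_log hx).sub_const k
  have hx2 : HasDerivAt (fun x : ℝ => x ^ 2) (2 * x) x := by simpa using hasDerivAt_pow 2 x
  have hx4 : HasDerivAt (fun x : ℝ => x ^ 4) (4 * x ^ 3) x := by simpa using hasDerivAt_pow 4 x
  refine ((((hx2.const_mul 3).add_const 1).fun_mul (hu.fun_pow 2)).fun_sub
    (((hx4.fun_add (hx2.const_mul 2)).sub_const 3).fun_mul hu)).fun_add
    ((hx2.sub_const 1).fun_pow 2) |>.congr_deriv ?_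
  unfold psi
  field_simp
  ring

-- As a quadratic in `u = log x - k`, `phi k x` has discriminant `(x² - 1)³(x² - 5)`,
-- so `phi k x ≤ 0` forces `x² ≥ 5`.
theorem psi_neg_of_phi_nonpos {k x : ℝ} (hx : 1 < x) (h : phi k x ≤ 0) : psi k x < 0 := by
  unfold phi at h
  unfold psi
  generalize log x - k = u at *
  have hx1 : 0 < x ^ 2 - 1 := by nlinarith
  have h1 : 0 ≤ (x ^ 2 - 1) ^ 3 * (x ^ 2 - 5) := by
    nlinarith [sq_nonneg (2 * (3 * x ^ 2 + 1) * u - (x ^ 2 - 1) * (x ^ 2 + 3))]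
  have h5 : 5 ≤ x ^ 2 := by
    by_contra! hlt
    nlinarith [mul_pos (pow_pos hx1 3) (show (0:ℝ) < 5 - x ^ 2 by linarith)]
  have hE : 0 ≤ 3 * x ^ 4 - 4 * x ^ 2 - 23 := by nlinarith
  have hw : 0 < 2 * (3 * x ^ 2 - 1) * u - 3 * (x ^ 2 + 1) := by
    by_contra! hw
    nlinarith [sq_nonneg (2 * (3 * x ^ 2 - 1) * u - 3 * (x ^ 2 + 1)),
      mul_nonneg (mul_nonneg (by positivity : (0:ℝ) ≤ 2 * x ^ 2) hE) (neg_nonneg.mpr hw),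
      mul_nonneg (sq_nonneg (3 * x ^ 2 - 1)) (neg_nonneg.mpr h)]
  nlinarith [mul_pos (pow_pos hx1 2) hw,
    mul_nonneg (by positivity : (0:ℝ) ≤ 6 * x ^ 2) (neg_nonneg.mpr h)]

theorem phi_exp_pos {k : ℝ} (hk : 0 < k) : 0 < phi k (exp k) := by
  have h : phi k (exp k) = (exp k ^ 2 - 1) ^ 2 := by simp [phi]
  have h1 : 1 < exp k := one_lt_exp_iff.2 hk
  rw [h]
  exact pow_pos (by nlinarith) 2

theorem phi_exp_add_two_nonpos {k : ℝ} (hk : 0 ≤ k) : phi k (exp (k + 2)) ≤ 0 := by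
  have hx : 3 ≤ exp (k + 2) := by linarith [add_one_le_exp (k + 2)]
  unfold phi
  rw [log_exp, add_sub_cancel_left]
  nlinarith [mul_le_mul hx hx (by norm_num) (by linarith)]

theorem exists_phi_sign_change {k : ℝ} (hk : 0 < k) :
    ∃ xs, exp k < xs ∧ (∀ x ∈ Ioo (exp k) xs, 0 < phi k x) ∧ ∀ x ∈ Ici xs, phi k x ≤ 0 :=
  exists_pos_on_Ioo_nonpos_on_Ici
    (fun x hx => hasDerivAt_phi k ((exp_pos k).trans_le hx).ne')
    (fun x hx h => div_neg_of_neg_of_pos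
      (psi_neg_of_phi_nonpos ((one_lt_exp_iff.2 hk).trans_le hx) h.le) ((exp_pos k).trans_le hx))
    (phi_exp_pos hk) (exp_le_exp.2 (by linarith)) (phi_exp_add_two_nonpos hk.le)

noncomputable def sigma (c k B T γ : ℝ) : ℝ :=
  c ^ 2 * γ * (γ + 2) / ((log (1 + γ) - k) ^ 2 * (1 + γ) ^ 2 * B * T)

noncomputable def power (N0 c k B T γ : ℝ) : ℝ := N0 * B * sigma c k B T γ * γ

noncomputable def sigmaDeriv (c k B T γ : ℝ) : ℝ :=
  2 * c ^ 2 * (log (1 + γ) - k - (1 + γ) ^ 2 + 1) / ((log (1 + γ) - k) ^ 3 * (1 + γ) ^ 3 * B * T)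

/-- `γ + sigma γ / sigmaDeriv γ`, so that `N0 * B * powerSlope k γ` is the slope `dP/ds`. -/
noncomputable def powerSlope (k γ : ℝ) : ℝ :=
  γ * (((1 + γ) ^ 2 + (1 + γ) + 2) * (log (1 + γ) - k) - 2 * ((1 + γ) ^ 2 - 1)) /
    (2 * (log (1 + γ) - k - (1 + γ) ^ 2 + 1))

noncomputable def powerSlopeDeriv (k γ : ℝ) : ℝ :=
  phi k (1 + γ) / (2 * (log (1 + γ) - k - (1 + γ) ^ 2 + 1) ^ 2)

variable {N0 c k B T γ : ℝ}

theorem hasDerivAt_log_one_add_sub (hx : 0 < 1 + γ) :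
    HasDerivAt (fun γ => log (1 + γ) - k) (1 + γ)⁻¹ γ := by
  simpa using ((hasDerivAt_log hx.ne').comp γ ((hasDerivAt_id γ).const_add 1)).sub_const k

theorem hasDerivAt_sigma (hx : 0 < 1 + γ) (hu : log (1 + γ) - k ≠ 0) (hB : B ≠ 0) (hT : T ≠ 0) :
    HasDerivAt (sigma c k B T) (sigmaDeriv c k B T γ) γ := by
  have h1 : HasDerivAt (fun γ : ℝ => 1 + γ) 1 γ := (hasDerivAt_id γ).const_add 1
  have hnum := ((hasDerivAt_id γ).const_mul (c ^ 2)).fun_mul ((hasDerivAt_id γ).add_const 2)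
  have hden := (((hasDerivAt_log_one_add_sub (k := k) hx).fun_pow 2).fun_mul
    (h1.fun_pow 2)).mul_const B |>.mul_const T
  refine (hnum.fun_div hden (by simp [hu, hx.ne', hB, hT])).congr_deriv ?_
  simp only [sigmaDeriv, id]
  field_simp
  ring

theorem hasDerivAt_power (hx : 0 < 1 + γ) (hu : log (1 + γ) - k ≠ 0)
    (hA : log (1 + γ) - k - (1 + γ) ^ 2 + 1 ≠ 0) (hB : B ≠ 0) (hT : T ≠ 0) :
    HasDerivAt (power N0 c k B T) (N0 * B * powerSlope k γ * sigmaDeriv c k B T γ) γ := by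
  refine (((hasDerivAt_sigma hx hu hB hT).const_mul (N0 * B)).fun_mul
    (hasDerivAt_id γ)).congr_deriv ?_
  simp only [powerSlope, sigmaDeriv, sigma, id]
  field_simp
  ring

theorem hasDerivAt_powerSlope (hx : 0 < 1 + γ) (hA : log (1 + γ) - k - (1 + γ) ^ 2 + 1 ≠ 0) :
    HasDerivAt (powerSlope k) (powerSlopeDeriv k γ) γ := by
  have h1 : HasDerivAt (fun γ : ℝ => 1 + γ) 1 γ := (hasDerivAt_id γ).const_add 1
  have hu := hasDerivAt_log_one_add_sub (k := k) hx
  have hnum := (hasDerivAt_id γ).fun_mul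
    (((((h1.fun_pow 2).fun_add h1).add_const 2).fun_mul hu).fun_sub
      (((h1.fun_pow 2).sub_const 1).const_mul 2))
  have hden := ((hu.fun_sub (h1.fun_pow 2)).add_const 1).const_mul 2
  refine (hnum.fun_div hden (mul_ne_zero two_ne_zero hA)).congr_deriv ?_
  simp only [powerSlopeDeriv, phi, id]
  field_simp
  ring

theorem sigmaDeriv_neg (hc : c ≠ 0) (hB : 0 < B) (hT : 0 < T) (hx : 0 < 1 + γ)
    (hu : 0 < log (1 + γ) - k) (hA : log (1 + γ) - k < (1 + γ) ^ 2 - 1) :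
    sigmaDeriv c k B T γ < 0 :=
  div_neg_of_neg_of_pos (mul_neg_of_pos_of_neg (by positivity) (by linarith)) (by positivity)

theorem bounds_of_exp_sub_one_lt (hk : 0 ≤ k) (hγ : exp k - 1 < γ) :
    0 < 1 + γ ∧ 0 < log (1 + γ) - k ∧ log (1 + γ) - k < (1 + γ) ^ 2 - 1 := by
  have hx : exp k < 1 + γ := by linarith
  have hx1 : 1 < 1 + γ := (one_le_exp hk).trans_lt hx
  refine ⟨by linarith, sub_pos.2 ((lt_log_iff_exp_lt (by linarith)).2 hx), ?_⟩
  nlinarith [log_le_sub_one_of_pos (show 0 < 1 + γ by linarith)]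

theorem hasDerivAt_sigma_power_of_exp_sub_one_lt (hc : c ≠ 0) (hB : 0 < B) (hT : 0 < T)
    (hk : 0 ≤ k) (hγ : exp k - 1 < γ) :
    HasDerivAt (sigma c k B T) (sigmaDeriv c k B T γ) γ ∧ sigmaDeriv c k B T γ < 0 ∧
      HasDerivAt (power N0 c k B T) (N0 * B * powerSlope k γ * sigmaDeriv c k B T γ) γ := by
  obtain ⟨hx, hu, hA⟩ := bounds_of_exp_sub_one_lt hk hγ
  exact ⟨hasDerivAt_sigma hx hu.ne' hB.ne' hT.ne', sigmaDeriv_neg hc hB hT hx hu hA,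
    hasDerivAt_power hx hu.ne' (by linarith) hB.ne' hT.ne'⟩

theorem hasDerivAt_powerSlope_of_exp_sub_one_lt (hk : 0 ≤ k) (hγ : exp k - 1 < γ) :
    HasDerivAt (powerSlope k) (powerSlopeDeriv k γ) γ := by
  obtain ⟨hx, -, hA⟩ := bounds_of_exp_sub_one_lt hk hγ
  exact hasDerivAt_powerSlope hx (by linarith)

theorem powerSlope_monotoneOn {xs : ℝ} (hk : 0 ≤ k) (hpos : ∀ x ∈ Ioo (exp k) xs, 0 < phi k x) :
    MonotoneOn (powerSlope k) (Ioc (exp k - 1) (xs - 1)) := by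
  have hd γ (hγ : γ ∈ Ioc (exp k - 1) (xs - 1)) := hasDerivAt_powerSlope_of_exp_sub_one_lt hk hγ.1
  refine monotoneOn_of_hasDerivWithinAt_nonneg (f' := powerSlopeDeriv k) (convex_Ioc _ _)
    (fun γ hγ => (hd γ hγ).continuousAt.continuousWithinAt) (fun γ hγ => ?_) (fun γ hγ => ?_)
  all_goals rw [interior_Ioc] at hγ
  · exact (hd γ (Ioo_subset_Ioc_self hγ)).hasDerivWithinAt
  · exact div_nonneg (hpos _ ⟨by linarith [hγ.1], by linarith [hγ.2]⟩).le (by positivity)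

theorem powerSlope_antitoneOn {xs : ℝ} (hk : 0 ≤ k) (hxs : exp k < xs)
    (hneg : ∀ x ∈ Ici xs, phi k x ≤ 0) : AntitoneOn (powerSlope k) (Ici (xs - 1)) := by
  have hd γ (hγ : γ ∈ Ici (xs - 1)) :=
    hasDerivAt_powerSlope_of_exp_sub_one_lt hk (show exp k - 1 < γ by linarith [mem_Ici.1 hγ])
  refine antitoneOn_of_hasDerivWithinAt_nonpos (f' := powerSlopeDeriv k) (convex_Ici _)
    (fun γ hγ => (hd γ hγ).continuousAt.continuousWithinAt) (fun γ hγ => ?_) (fun γ hγ => ?_)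
  all_goals rw [interior_Ici] at hγ
  · exact (hd γ (Ioi_subset_Ici_self hγ)).hasDerivWithinAt
  · exact div_nonpos_of_nonpos_of_nonneg (hneg _ (mem_Ici.2 (by linarith [mem_Ioi.1 hγ])))
      (by positivity)

end PacketPower

open PacketPower in
/-- The power–versus–packets curve traced parametrically by
`γ ↦ (σ(γ), Pw(γ))` on `Γ = (2^{L/(B·T)} − 1, ∞)` has an inflection point `γ*`:
it is concave for `s ≥ σ(γ*)` (chord inequality (i), recalling that `σ` is antitone
so `γa < γm < γb ≤ γ*` corresponds to `σ(γa) > σ(γm) > σ(γb) ≥ σ(γ*)`) and convex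
for `0 < s ≤ σ(γ*)` (chord inequality (ii)). (`Pw` plays the role of `Π`.) -/
theorem power_packet_curve_inflection
    (T B L N0 c k : ℝ)
    (hT : 0 < T) (hB : 0 < B) (hL : 0 < L) (hN0 : 0 < N0) (hc : 0 < c)
    (hk : k = (L / (B * T)) * Real.log 2)
    (σ Pw : ℝ → ℝ)
    (hσ : ∀ γ, σ γ = c ^ 2 * γ * (γ + 2) /
        ((Real.log (1 + γ) - k) ^ 2 * (1 + γ) ^ 2 * B * T))
    (hPw : ∀ γ, Pw γ = N0 * B * σ γ * γ) :
    ∃ γs : ℝ, (2 : ℝ) ^ (L / (B * T)) - 1 < γs ∧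
      (∀ γa γm γb : ℝ,
        (2 : ℝ) ^ (L / (B * T)) - 1 < γa →
        (2 : ℝ) ^ (L / (B * T)) - 1 < γm →
        (2 : ℝ) ^ (L / (B * T)) - 1 < γb →
        γa < γm → γm < γb → γb ≤ γs →
        Pw γm ≥ Pw γb + ((σ γm - σ γb) / (σ γa - σ γb)) * (Pw γa - Pw γb)) ∧
      (∀ γa γm γb : ℝ,
        (2 : ℝ) ^ (L / (B * T)) - 1 < γa →
        (2 : ℝ) ^ (L / (B * T)) - 1 < γm →
        (2 : ℝ) ^ (L / (B * T)) - 1 < γb →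
        γs ≤ γb → γb < γm → γm < γa →
        Pw γm ≤ Pw γb + ((σ γm - σ γb) / (σ γa - σ γb)) * (Pw γa - Pw γb)) := by
  have hk₀ : 0 < k := hk ▸ mul_pos (div_pos hL (mul_pos hB hT)) (log_pos one_lt_two)
  have hΓ : (2 : ℝ) ^ (L / (B * T)) = exp k := by rw [rpow_def_of_pos two_pos, hk, mul_comm]
  obtain rfl : σ = sigma c k B T := funext hσ
  obtain rfl : Pw = power N0 c k B T := funext hPw
  have hderiv (γ : ℝ) (hγ : exp k - 1 < γ) :=
    hasDerivAt_sigma_power_of_exp_sub_one_lt (N0 := N0) hc.ne' hB hT hk₀.le hγ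
  have hNB : 0 ≤ N0 * B := by positivity
  obtain ⟨xs, hxs, hpos, hneg⟩ := exists_phi_sign_change hk₀
  rw [hΓ]
  refine ⟨xs - 1, by linarith, fun γa γm γb ha _ _ ham hmb hbs => ?_,
    fun γa γm γb _ _ hb hbs hbm hma => ?_⟩
  · have hI : Icc γa γb ⊆ Ioc (exp k - 1) (xs - 1) := fun x hx => ⟨ha.trans_le hx.1, hx.2.trans hbs⟩
    exact secant_le_of_monotoneOn (m := fun γ => N0 * B * powerSlope k γ) ham hmb
      (fun x hx => (hderiv x (hI hx).1).1) (fun x hx => (hderiv x (hI hx).1).2.1)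
      (fun x hx => (hderiv x (hI hx).1).2.2) fun x hx y hy hxy =>
        mul_le_mul_of_nonneg_left (powerSlope_monotoneOn hk₀.le hpos (hI hx) (hI hy) hxy) hNB
  · have hI : Icc γb γa ⊆ Ici (xs - 1) := fun x hx => hbs.trans hx.1
    have hΓI : Icc γb γa ⊆ Ioi (exp k - 1) := fun x hx => hb.trans_le hx.1
    exact le_secant_of_antitoneOn (m := fun γ => N0 * B * powerSlope k γ) hbm hma
      (fun x hx => (hderiv x (hΓI hx)).1) (fun x hx => (hderiv x (hΓI hx)).2.1)
      (fun x hx => (hderiv x (hΓI hx)).2.2) fun x hx y hy hxy =>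
        mul_le_mul_of_nonneg_left (powerSlope_antitoneOn hk₀.le hxs hneg (hI hx) (hI hy) hxy) hNB
end

section
/- If (f, π) is a policy together with a stationary distribution π of f, then the family x defined by x_{q,s} = f_{q,s}·π_q for all q ∈ {0,…,Q} and s ∈ {0,…,S} is an LP point, and moreover D(x) = D(f,π) and P̄(x) = P̄(f,π). -/
open Finset

/-- Minimal number of packets that may be served at queue length `q`:
`s_q^min = max{0, q − (Q − A)}` (natural subtraction realizes the `max` with `0`). -/
def sLo (Q A q : ℕ) : ℕ := q - (Q - A)

/-- Maximal number of packets that may be served at queue length `q`: `s_q^max = min{S, q}`. -/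
def sHi (S q : ℕ) : ℕ := min S q

/-- Indicator `1{i − s + A = j}` (integer arithmetic), as a real number. -/
noncomputable def indArr (A i s j : ℕ) : ℝ :=
  if (i : ℤ) - (s : ℤ) + (A : ℤ) = (j : ℤ) then 1 else 0

/-- Indicator `1{i − s = j}` (integer arithmetic), as a real number. -/
noncomputable def indNoArr (i s j : ℕ) : ℝ :=
  if (i : ℤ) - (s : ℤ) = (j : ℤ) then 1 else 0

/-- Transition probability `λ_{i,j}` of the queue under policy `f`. -/
noncomputable def lam (S A : ℕ) (α : ℝ) (f : ℕ → ℕ → ℝ) (i j : ℕ) : ℝ :=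
  ∑ s ∈ range (S + 1), f i s * (α * indArr A i s j + (1 - α) * indNoArr i s j)

/-- A (probabilistic, queue-aware) variable-length coding policy. -/
def IsPolicy (Q S A : ℕ) (f : ℕ → ℕ → ℝ) : Prop :=
  (∀ q ≤ Q, ∀ s ≤ S, 0 ≤ f q s) ∧
  (∀ q ≤ Q, ∑ s ∈ range (S + 1), f q s = 1) ∧
  (∀ q ≤ Q, ∀ s ≤ S, (s < sLo Q A q ∨ sHi S q < s) → f q s = 0)

/-- `pi` is a stationary distribution of the queue-length Markov chain of policy `f`. -/
def IsStationaryDist (Q S A : ℕ) (α : ℝ) (f : ℕ → ℕ → ℝ) (pi : ℕ → ℝ) : Prop :=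
  (∀ q ≤ Q, 0 ≤ pi q) ∧
  (∑ q ∈ range (Q + 1), pi q = 1) ∧
  (∀ j ≤ Q, pi j = ∑ i ∈ range (Q + 1), lam S A α f i j * pi i)

/-- Average delay `D(f,π) = (1/(A·α))·Σ_q q·π_q` of a policy with stationary distribution `pi`. -/
noncomputable def delayFP (Q A : ℕ) (α : ℝ) (pi : ℕ → ℝ) : ℝ :=
  (1 / (A * α)) * ∑ q ∈ range (Q + 1), (q : ℝ) * pi q

/-- Average power `P̄(f,π) = Σ_q Σ_s P(s)·f_{q,s}·π_q`. -/
noncomputable def powerFP (Q S : ℕ) (P : ℕ → ℝ) (f : ℕ → ℕ → ℝ) (pi : ℕ → ℝ) : ℝ :=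
  ∑ q ∈ range (Q + 1), ∑ s ∈ range (S + 1), P s * f q s * pi q

/-- An LP point: a feasible point of the equivalent linear program. -/
def IsLP (Q S A : ℕ) (α : ℝ) (x : ℕ → ℕ → ℝ) : Prop :=
  (∀ q ≤ Q, ∀ s ≤ S, 0 ≤ x q s) ∧
  (∀ q ≤ Q, ∀ s ≤ S, (s < sLo Q A q ∨ sHi S q < s) → x q s = 0) ∧
  (∑ q ∈ range (Q + 1), ∑ s ∈ range (S + 1), x q s = 1) ∧
  (∀ j ≤ Q,
    ∑ i ∈ range (Q + 1), ∑ s ∈ range (S + 1),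
      x i s * (α * indArr A i s j + (1 - α) * indNoArr i s j)
    = ∑ s ∈ range (S + 1), x j s)

/-- Delay `D(x) = (1/(A·α))·Σ_{q,s} q·x_{q,s}` of an LP point. -/
noncomputable def delayLP (Q S A : ℕ) (α : ℝ) (x : ℕ → ℕ → ℝ) : ℝ :=
  (1 / (A * α)) * ∑ q ∈ range (Q + 1), ∑ s ∈ range (S + 1), (q : ℝ) * x q s

/-- Power `P̄(x) = Σ_{q,s} P(s)·x_{q,s}` of an LP point. -/
noncomputable def powerLP (Q S : ℕ) (P : ℕ → ℝ) (x : ℕ → ℕ → ℝ) : ℝ :=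
  ∑ q ∈ range (Q + 1), ∑ s ∈ range (S + 1), P s * x q s

/-!
Each row of `f` sums to `1`, so the `s`-marginal of `x_{q,s} = f_{q,s} π_q` is `π`. Under this
identity the balance equations of the LP become the stationarity equations of `π`, and the
delay and power of `x` become those of `(f, π)`.
-/

def occupation (f : ℕ → ℕ → ℝ) (pi : ℕ → ℝ) (q s : ℕ) : ℝ := f q s * pi q

section

variable {Q S : ℕ} {f : ℕ → ℕ → ℝ} {pi : ℕ → ℝ}

lemma sum_occupation_eq (hrow : ∀ q ≤ Q, ∑ s ∈ range (S + 1), f q s = 1) {q : ℕ} (hq : q ≤ Q) :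
    ∑ s ∈ range (S + 1), occupation f pi q s = pi q := by
  simp only [occupation]
  rw [← sum_mul, hrow q hq, one_mul]

lemma sum_sum_mul_occupation (hrow : ∀ q ≤ Q, ∑ s ∈ range (S + 1), f q s = 1) (g : ℕ → ℝ) :
    ∑ q ∈ range (Q + 1), ∑ s ∈ range (S + 1), g q * occupation f pi q s =
      ∑ q ∈ range (Q + 1), g q * pi q := by
  refine sum_congr rfl fun q hq => ?_
  rw [← mul_sum, sum_occupation_eq hrow (Nat.lt_succ_iff.mp (mem_range.mp hq))]

lemma sum_occupation_mul_transition (A : ℕ) (α : ℝ) (i j : ℕ) :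
    ∑ s ∈ range (S + 1), occupation f pi i s * (α * indArr A i s j + (1 - α) * indNoArr i s j) =
      lam S A α f i j * pi i := by
  rw [lam, sum_mul]
  exact sum_congr rfl fun s _ => by rw [occupation]; ring

end

theorem policy_to_LP_point_general
    (Q S A : ℕ) (α : ℝ) (P : ℕ → ℝ)
    (f : ℕ → ℕ → ℝ) (pi : ℕ → ℝ)
    (hf : IsPolicy Q S A f) (hpi : IsStationaryDist Q S A α f pi) :
    IsLP Q S A α (fun q s => f q s * pi q) ∧
    delayLP Q S A α (fun q s => f q s * pi q) = delayFP Q A α pi ∧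
    powerLP Q S P (fun q s => f q s * pi q) = powerFP Q S P f pi := by
  obtain ⟨hf_nonneg, hrow, hf_support⟩ := hf
  obtain ⟨hpi_nonneg, hpi_sum, hbalance⟩ := hpi
  change IsLP Q S A α (occupation f pi) ∧ delayLP Q S A α (occupation f pi) = _ ∧
    powerLP Q S P (occupation f pi) = _
  refine ⟨⟨fun q hq s hs => mul_nonneg (hf_nonneg q hq s hs) (hpi_nonneg q hq), ?_, ?_, ?_⟩,
    ?_, ?_⟩
  · intro q hq s hs hout
    simp [occupation, hf_support q hq s hs hout]
  · simpa [hpi_sum] using sum_sum_mul_occupation (pi := pi) hrow (fun _ => 1)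
  · intro j hj
    simp only [sum_occupation_mul_transition, sum_occupation_eq hrow hj, ← hbalance j hj]
  · rw [delayLP, delayFP, sum_sum_mul_occupation hrow]
  · rw [powerLP, powerFP]
    exact sum_congr rfl fun q _ => sum_congr rfl fun s _ => by rw [occupation]; ring

/-- From a policy `f` with stationary distribution `pi`, the family
`x_{q,s} = f_{q,s}·π_q` is an LP point with the same delay and power. -/
theorem policy_to_LP_point
    (Q S A : ℕ) (α : ℝ) (P : ℕ → ℝ)
    (hA : 1 ≤ A) (hAS : A ≤ S) (hSQ : S ≤ Q)
    (hα0 : 0 < α) (hα1 : α < 1)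
    (hP : ∀ s ≤ S, 0 ≤ P s)
    (f : ℕ → ℕ → ℝ) (pi : ℕ → ℝ)
    (hf : IsPolicy Q S A f) (hpi : IsStationaryDist Q S A α f pi) :
    IsLP Q S A α (fun q s => f q s * pi q) ∧
    delayLP Q S A α (fun q s => f q s * pi q) = delayFP Q A α pi ∧
    powerLP Q S P (fun q s => f q s * pi q) = powerFP Q S P f pi :=
  policy_to_LP_point_general Q S A α P f pi hf hpi
end

section
/- Let x be an LP point. Define π_q = Σ_{s=0}^{S} x_{q,s} for each q ∈ {0,…,Q}, and define f by f_{q,s} = x_{q,s}/π_q whenever π_q > 0, and f_{q,s} = 1{s = s_q^max} whenever π_q = 0. Then f is a policy, π is a stationary distribution of f, and D(f,π) = D(x) and P̄(f,π) = P̄(x). -/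
open Finset

/-!
Dividing each row of `x` by its mass `π_q` recovers `x_{q,s} = f_{q,s} π_q` for every row, including
the rows with `π_q = 0`, where `x_{q,·}` vanishes. Under this identity the LP balance equations are
exactly the stationarity equations of `f`, and the delay and power of `(f, π)` are those of `x`.
Rows with `π_q = 0` still yield a probability vector on `[s_q^min, s_q^max]` because
`s_q^min ≤ s_q^max` as soon as `A ≤ S`.
-/

section Normalize

variable {S : ℕ} {x f g : ℕ → ℝ} {p : ℝ}

theorem eq_zero_of_sum_range_eq_zero (hx : ∀ s ≤ S, 0 ≤ x s)
    (h : ∑ s ∈ range (S + 1), x s = 0) {s : ℕ} (hs : s ≤ S) : x s = 0 :=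
  (sum_eq_zero_iff_of_nonneg fun t ht => hx t (mem_range_succ_iff.mp ht)).mp h s
    (mem_range_succ_iff.mpr hs)

theorem normalize_mul_eq (hx : ∀ s ≤ S, 0 ≤ x s) (hp : p = ∑ s ∈ range (S + 1), x s)
    (hf : ∀ s, f s = if 0 < p then x s / p else g s) {s : ℕ} (hs : s ≤ S) :
    f s * p = x s := by
  have hp_nonneg : 0 ≤ p := hp ▸ sum_nonneg fun t ht => hx t (mem_range_succ_iff.mp ht)
  rcases hp_nonneg.lt_or_eq with hpos | hzero
  · rw [hf, if_pos hpos, div_mul_cancel₀ _ hpos.ne']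
  · rw [← hzero, mul_zero, eq_zero_of_sum_range_eq_zero hx (hp ▸ hzero.symm) hs]

theorem normalize_nonneg (hx : ∀ s ≤ S, 0 ≤ x s)
    (hf : ∀ s, f s = if 0 < p then x s / p else g s) (hg : ∀ s ≤ S, 0 ≤ g s) {s : ℕ}
    (hs : s ≤ S) : 0 ≤ f s := by
  rw [hf]
  split_ifs with hpos
  · exact div_nonneg (hx s hs) hpos.le
  · exact hg s hs

theorem sum_normalize_eq_one (hp : p = ∑ s ∈ range (S + 1), x s)
    (hf : ∀ s, f s = if 0 < p then x s / p else g s) (hg : ∑ s ∈ range (S + 1), g s = 1) :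
    ∑ s ∈ range (S + 1), f s = 1 := by
  simp only [hf]
  split_ifs with hpos
  · rw [← sum_div, ← hp, div_self hpos.ne']
  · exact hg

theorem normalize_eq_zero_of_eq_zero (hf : ∀ s, f s = if 0 < p then x s / p else g s) {s : ℕ}
    (hxs : x s = 0) (hgs : g s = 0) : f s = 0 := by
  rw [hf, hxs, hgs, zero_div, ite_self]

end Normalize

theorem sLo_le_sHi {Q S A q : ℕ} (hAS : A ≤ S) (hq : q ≤ Q) : sLo Q A q ≤ sHi S q := by
  simp only [sLo, sHi]
  omega

theorem isPolicy_of_normalize {Q S A : ℕ} {α : ℝ} {x f : ℕ → ℕ → ℝ} {pi : ℕ → ℝ}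
    (hAS : A ≤ S) (hx : IsLP Q S A α x) (hpi : ∀ q, pi q = ∑ s ∈ range (S + 1), x q s)
    (hf : ∀ q s, f q s = if 0 < pi q then x q s / pi q else if s = sHi S q then 1 else 0) :
    IsPolicy Q S A f := by
  obtain ⟨hx_nonneg, hx_supp, -, -⟩ := hx
  refine ⟨fun q hq s hs => ?_, fun q _ => ?_, fun q hq s hs hout => ?_⟩
  · exact normalize_nonneg (hx_nonneg q hq) (hf q) (fun t _ => by positivity) hs
  · refine sum_normalize_eq_one (hpi q) (hf q) ?_
    have hmax : sHi S q ∈ range (S + 1) := mem_range_succ_iff.mpr (min_le_left S q)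
    rw [sum_ite_eq' _ _ fun _ => (1 : ℝ), if_pos hmax]
  · have hne : s ≠ sHi S q := by
      have := sLo_le_sHi (S := S) hAS hq
      omega
    exact normalize_eq_zero_of_eq_zero (hf q) (hx_supp q hq s hs hout) (if_neg hne)

theorem lam_mul_eq {S A i j : ℕ} {α p : ℝ} {x f : ℕ → ℕ → ℝ}
    (h : ∀ s ≤ S, f i s * p = x i s) :
    lam S A α f i j * p =
      ∑ s ∈ range (S + 1), x i s * (α * indArr A i s j + (1 - α) * indNoArr i s j) := by
  rw [lam, sum_mul]
  refine sum_congr rfl fun s hs => ?_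
  rw [mul_right_comm, h s (mem_range_succ_iff.mp hs)]

theorem isStationaryDist_of_mul_eq {Q S A : ℕ} {α : ℝ} {x f : ℕ → ℕ → ℝ} {pi : ℕ → ℝ}
    (hx : IsLP Q S A α x) (hpi : ∀ q, pi q = ∑ s ∈ range (S + 1), x q s)
    (hrow : ∀ q ≤ Q, ∀ s ≤ S, f q s * pi q = x q s) :
    IsStationaryDist Q S A α f pi := by
  obtain ⟨hx_nonneg, -, hx_sum, hx_bal⟩ := hx
  refine ⟨fun q hq => ?_, by simpa only [hpi] using hx_sum, fun j hj => ?_⟩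
  · rw [hpi]
    exact sum_nonneg fun s hs => hx_nonneg q hq s (mem_range_succ_iff.mp hs)
  · rw [hpi j, ← hx_bal j hj]
    exact (sum_congr rfl fun i hi => lam_mul_eq (hrow i (mem_range_succ_iff.mp hi))).symm

theorem delayFP_eq_delayLP {Q S A : ℕ} {α : ℝ} {x : ℕ → ℕ → ℝ} {pi : ℕ → ℝ}
    (hpi : ∀ q, pi q = ∑ s ∈ range (S + 1), x q s) :
    delayFP Q A α pi = delayLP Q S A α x := by
  simp only [delayFP, delayLP, hpi, mul_sum]

theorem powerFP_eq_powerLP {Q S : ℕ} {P : ℕ → ℝ} {x f : ℕ → ℕ → ℝ} {pi : ℕ → ℝ}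
    (hrow : ∀ q ≤ Q, ∀ s ≤ S, f q s * pi q = x q s) :
    powerFP Q S P f pi = powerLP Q S P x := by
  refine sum_congr rfl fun q hq => sum_congr rfl fun s hs => ?_
  rw [mul_assoc, hrow q (mem_range_succ_iff.mp hq) s (mem_range_succ_iff.mp hs)]

theorem LP_point_to_policy_general
    (Q S A : ℕ) (α : ℝ) (P : ℕ → ℝ)
    (hAS : A ≤ S)
    (x : ℕ → ℕ → ℝ) (hx : IsLP Q S A α x)
    (pi : ℕ → ℝ) (hpi : ∀ q, pi q = ∑ s ∈ range (S + 1), x q s)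
    (f : ℕ → ℕ → ℝ)
    (hf : ∀ q s, f q s =
      if 0 < pi q then x q s / pi q else if s = sHi S q then 1 else 0) :
    IsPolicy Q S A f ∧ IsStationaryDist Q S A α f pi ∧
    delayFP Q A α pi = delayLP Q S A α x ∧
    powerFP Q S P f pi = powerLP Q S P x := by
  have hrow : ∀ q ≤ Q, ∀ s ≤ S, f q s * pi q = x q s := fun q hq _ hs =>
    normalize_mul_eq (hx.1 q hq) (hpi q) (hf q) hs
  exact ⟨isPolicy_of_normalize hAS hx hpi hf, isStationaryDist_of_mul_eq hx hpi hrow,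
    delayFP_eq_delayLP hpi, powerFP_eq_powerLP hrow⟩

/-- From an LP point `x`, setting `π_q = Σ_s x_{q,s}` and
`f_{q,s} = x_{q,s}/π_q` when `π_q > 0`, `f_{q,s} = 1{s = s_q^max}` when `π_q = 0`,
yields a policy `f` with stationary distribution `pi` having the same delay and power. -/
theorem LP_point_to_policy
    (Q S A : ℕ) (α : ℝ) (P : ℕ → ℝ)
    (hA : 1 ≤ A) (hAS : A ≤ S) (hSQ : S ≤ Q)
    (hα0 : 0 < α) (hα1 : α < 1)
    (hP : ∀ s ≤ S, 0 ≤ P s)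
    (x : ℕ → ℕ → ℝ) (hx : IsLP Q S A α x)
    (pi : ℕ → ℝ) (hpi : ∀ q, pi q = ∑ s ∈ range (S + 1), x q s)
    (f : ℕ → ℕ → ℝ)
    (hf : ∀ q s, f q s =
      if 0 < pi q then x q s / pi q else if s = sHi S q then 1 else 0) :
    IsPolicy Q S A f ∧ IsStationaryDist Q S A α f pi ∧
    delayFP Q A α pi = delayLP Q S A α x ∧
    powerFP Q S P f pi = powerLP Q S P x :=
  LP_point_to_policy_general Q S A α P hAS x hx pi hpi f hf
end

section
/- Define the optimal delay-power tradeoff function V : ℝ → ℝ by V(p) = inf { D(x) : x an LP point with P̄(x) ≤ p }, and let Dom = { p ∈ ℝ : there exists an LP point x with P̄(x) ≤ p }. Then V is convex on Dom and antitone (nonincreasing) on Dom: for p1, p2 ∈ Dom with p1 ≤ p2 one has V(p2) ≤ V(p1), and for p1, p2 ∈ Dom and t ∈ [0,1], V(t·p1 + (1−t)·p2) ≤ t·V(p1) + (1−t)·V(p2). -/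
open Finset

/-- `pi` is a stationary distribution of the queue-length Markov chain of policy `f`. -/
def IsStationaryPi (Q S A : ℕ) (α : ℝ) (f : ℕ → ℕ → ℝ) (pi : ℕ → ℝ) : Prop :=
  (∀ q ≤ Q, 0 ≤ pi q) ∧
  (∑ q ∈ range (Q + 1), pi q = 1) ∧
  (∀ j ≤ Q, pi j = ∑ i ∈ range (Q + 1), lam S A α f i j * pi i)

/-! The LP points form a convex set on which delay and power are linear. The optimal value of
a convex program as a function of the right-hand side `p` of its constraint is nonincreasing and
convex: a convex combination of points feasible for `p₁` and `p₂` is feasible for the same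
combination of `p₁` and `p₂`, and its delay is at most the same combination of their delays. -/

section ValueFunction

open Pointwise

variable {E : Type*} {C : Set E} {D P : E → ℝ}

noncomputable def valueFunction (C : Set E) (D P : E → ℝ) (p : ℝ) : ℝ :=
  sInf {d | ∃ x ∈ C, P x ≤ p ∧ d = D x}

lemma bddBelow_feasibleValues (hD : BddBelow (D '' C)) (p : ℝ) :
    BddBelow {d | ∃ x ∈ C, P x ≤ p ∧ d = D x} :=
  hD.mono <| by rintro _ ⟨x, hx, -, rfl⟩; exact ⟨x, hx, rfl⟩

lemma valueFunction_antitoneOn (hD : BddBelow (D '' C)) :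
    AntitoneOn (valueFunction C D P) {p | ∃ x ∈ C, P x ≤ p} := by
  rintro p₁ ⟨x, hx, hxp⟩ p₂ - hp
  refine csInf_le_csInf (bddBelow_feasibleValues hD p₂) ⟨D x, x, hx, hxp, rfl⟩ ?_
  rintro _ ⟨y, hy, hyp, rfl⟩
  exact ⟨y, hy, hyp.trans hp, rfl⟩

lemma isUpperSet_setOf_exists_le : IsUpperSet {p | ∃ x ∈ C, P x ≤ p} :=
  fun _ _ hpq ⟨x, hx, hxp⟩ => ⟨x, hx, hxp.trans hpq⟩

variable [AddCommGroup E] [Module ℝ E]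

lemma valueFunction_convexOn (hD : ConvexOn ℝ C D) (hP : ConvexOn ℝ C P)
    (hDb : BddBelow (D '' C)) :
    ConvexOn ℝ {p | ∃ x ∈ C, P x ≤ p} (valueFunction C D P) := by
  refine ⟨isUpperSet_setOf_exists_le.ordConnected.convex, ?_⟩
  rintro p₁ ⟨x₁, hx₁, hxp₁⟩ p₂ ⟨x₂, hx₂, hxp₂⟩ a b ha hb hab
  set F : ℝ → Set ℝ := fun p => {d | ∃ x ∈ C, P x ≤ p ∧ d = D x}
  have hF : ∀ {x p}, x ∈ C → P x ≤ p → (F p).Nonempty := fun hx hxp => ⟨_, _, hx, hxp, rfl⟩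
  have hcombo :
      a • valueFunction C D P p₁ + b • valueFunction C D P p₂ = sInf (a • F p₁ + b • F p₂) := by
    rw [csInf_add ((hF hx₁ hxp₁).smul_set) ((bddBelow_feasibleValues hDb p₁).smul_of_nonneg ha)
      ((hF hx₂ hxp₂).smul_set) ((bddBelow_feasibleValues hDb p₂).smul_of_nonneg hb),
      Real.sInf_smul_of_nonneg ha, Real.sInf_smul_of_nonneg hb]
    rfl
  rw [hcombo]
  refine le_csInf ((hF hx₁ hxp₁).smul_set.add (hF hx₂ hxp₂).smul_set) ?_
  rintro _ ⟨_, ⟨_, ⟨y₁, hy₁, hyp₁, rfl⟩, rfl⟩, _, ⟨_, ⟨y₂, hy₂, hyp₂, rfl⟩, rfl⟩, rfl⟩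
  have hy : a • y₁ + b • y₂ ∈ C := hD.1 hy₁ hy₂ ha hb hab
  have hPy : P (a • y₁ + b • y₂) ≤ a • p₁ + b • p₂ :=
    (hP.2 hy₁ hy₂ ha hb hab).trans (add_le_add (smul_le_smul_of_nonneg_left hyp₁ ha)
      (smul_le_smul_of_nonneg_left hyp₂ hb))
  exact csInf_le_of_le (bddBelow_feasibleValues hDb _) ⟨_, hy, hPy, rfl⟩ (hD.2 hy₁ hy₂ ha hb hab)

end ValueFunction

lemma convexOn_sum_sum_mul {s : Set (ℕ → ℕ → ℝ)} (hs : Convex ℝ s) (m n : ℕ)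
    (w : ℕ → ℕ → ℝ) :
    ConvexOn ℝ s fun x => ∑ i ∈ range m, ∑ j ∈ range n, w i j * x i j :=
  LinearMap.convexOn
    { toFun := fun x => ∑ i ∈ range m, ∑ j ∈ range n, w i j * x i j
      map_add' := fun x y => by simp only [Pi.add_apply, mul_add, sum_add_distrib]
      map_smul' := fun c x => by
        simp only [Pi.smul_apply, smul_eq_mul, mul_sum, RingHom.id_apply, mul_left_comm] }
    hs

lemma convex_setOf_isLP (Q S A : ℕ) (α : ℝ) : Convex ℝ {x | IsLP Q S A α x} := by
  rintro x ⟨hx₀, hxz, hx₁, hxb⟩ y ⟨hy₀, hyz, hy₁, hyb⟩ a b ha hb hab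
  simp only [Set.mem_ofPred_eq, IsLP, Pi.add_apply, Pi.smul_apply, smul_eq_mul]
  refine ⟨fun q hq s hs => ?_, fun q hq s hs h => ?_, ?_, fun j hj => ?_⟩
  · exact add_nonneg (mul_nonneg ha (hx₀ q hq s hs)) (mul_nonneg hb (hy₀ q hq s hs))
  · rw [hxz q hq s hs h, hyz q hq s hs h]; ring
  · simp only [sum_add_distrib, ← mul_sum, hx₁, hy₁]; linarith
  · simp only [add_mul, sum_add_distrib, mul_assoc, ← mul_sum, hxb j hj, hyb j hj]

lemma delayLP_nonneg {Q S A : ℕ} {α : ℝ} {x : ℕ → ℕ → ℝ} (hα : 0 ≤ α)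
    (hx : IsLP Q S A α x) : 0 ≤ delayLP Q S A α x :=
  mul_nonneg (by positivity) <| sum_nonneg fun q hq => sum_nonneg fun s hs =>
    mul_nonneg q.cast_nonneg
      (hx.1 q (Nat.lt_succ_iff.mp (mem_range.mp hq)) s (Nat.lt_succ_iff.mp (mem_range.mp hs)))

theorem tradeoff_convex_antitone_general
    (Q S A : ℕ) (α : ℝ) (P : ℕ → ℝ)
    (hα0 : 0 < α)
    (V : ℝ → ℝ)
    (hV : ∀ p, V p = sInf {d : ℝ | ∃ x, IsLP Q S A α x ∧
        powerLP Q S P x ≤ p ∧ d = delayLP Q S A α x})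
    (Dom : Set ℝ)
    (hDom : Dom = {p : ℝ | ∃ x, IsLP Q S A α x ∧ powerLP Q S P x ≤ p}) :
    (∀ p1 ∈ Dom, ∀ p2 ∈ Dom, p1 ≤ p2 → V p2 ≤ V p1) ∧
    (∀ p1 ∈ Dom, ∀ p2 ∈ Dom, ∀ t : ℝ, 0 ≤ t → t ≤ 1 →
      V (t * p1 + (1 - t) * p2) ≤ t * V p1 + (1 - t) * V p2) := by
  have hC := convex_setOf_isLP Q S A α
  have hD : ConvexOn ℝ {x | IsLP Q S A α x} (delayLP Q S A α) :=
    (convexOn_sum_sum_mul hC _ _ fun q _ => (q : ℝ)).smul (by positivity)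
  have hPow : ConvexOn ℝ {x | IsLP Q S A α x} (powerLP Q S P) :=
    convexOn_sum_sum_mul hC _ _ fun _ s => P s
  have hDb : BddBelow (delayLP Q S A α '' {x | IsLP Q S A α x}) :=
    ⟨0, by rintro _ ⟨x, hx, rfl⟩; exact delayLP_nonneg hα0.le hx⟩
  obtain rfl : V = valueFunction {x | IsLP Q S A α x} (delayLP Q S A α) (powerLP Q S P) :=
    funext hV
  subst hDom
  exact ⟨fun p₁ h₁ p₂ h₂ hp => valueFunction_antitoneOn hDb h₁ h₂ hp,
    fun p₁ h₁ p₂ h₂ t ht₀ ht₁ =>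
      (valueFunction_convexOn hD hPow hDb).2 h₁ h₂ ht₀ (sub_nonneg.2 ht₁) (by ring)⟩

/-- The optimal delay-power tradeoff function
`V(p) = inf { D(x) : x an LP point, P̄(x) ≤ p }` is nonincreasing and convex on its
domain `Dom = { p : ∃ LP point x with P̄(x) ≤ p }`. -/
theorem tradeoff_convex_antitone
    (Q S A : ℕ) (α : ℝ) (P : ℕ → ℝ)
    (hA : 1 ≤ A) (hAS : A ≤ S) (hSQ : S ≤ Q)
    (hα0 : 0 < α) (hα1 : α < 1)
    (hP : ∀ s ≤ S, 0 ≤ P s)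
    (V : ℝ → ℝ)
    (hV : ∀ p, V p = sInf {d : ℝ | ∃ x, IsLP Q S A α x ∧
        powerLP Q S P x ≤ p ∧ d = delayLP Q S A α x})
    (Dom : Set ℝ)
    (hDom : Dom = {p : ℝ | ∃ x, IsLP Q S A α x ∧ powerLP Q S P x ≤ p}) :
    (∀ p1 ∈ Dom, ∀ p2 ∈ Dom, p1 ≤ p2 → V p2 ≤ V p1) ∧
    (∀ p1 ∈ Dom, ∀ p2 ∈ Dom, ∀ t : ℝ, 0 ≤ t → t ≤ 1 →
      V (t * p1 + (1 - t) * p2) ≤ t * V p1 + (1 - t) * V p2) :=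
  tradeoff_convex_antitone_general Q S A α P hα0 V hV Dom hDom
end

section
/- Define V : ℝ → ℝ by V(p) = inf { D(x) : x an LP point with P̄(x) ≤ p } and Dom = { p ∈ ℝ : there exists an LP point x with P̄(x) ≤ p }. Then V is piecewise linear on Dom: there exists a finite nonempty set F of pairs (a, b) ∈ ℝ × ℝ such that for every p ∈ Dom, V(p) = max_{(a,b) ∈ F} (a·p + b). -/
open Finset

/-- `pi` is a stationary distribution of the queue-length Markov chain of policy `f`. -/
def IsStationaryQueue (Q S A : ℕ) (α : ℝ) (f : ℕ → ℕ → ℝ) (pi : ℕ → ℝ) : Prop :=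
  (∀ q ≤ Q, 0 ≤ pi q) ∧
  (∑ q ∈ range (Q + 1), pi q = 1) ∧
  (∀ j ≤ Q, pi j = ∑ i ∈ range (Q + 1), lam S A α f i j * pi i)

/-!
The LP points vanishing outside `[0, Q] × [0, S]` form a compact polyhedron. An extreme point of
it is determined by its set of vanishing coordinates, so there are finitely many, and by
Krein–Milman the polyhedron is the convex hull of a finite set `W`. Writing `a` for the power and
`c` for the delay, `V p = min {c x | x ∈ conv W, a x ≤ p}`. For this one-constraint problem
Lagrangian duality gives `V p = max_{t ≥ 0} (min_{w ∈ W} (c w + t * a w) - t * p)`, and the maximum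
is attained at one of the finitely many parameters `t` where two points of `W` tie; each of them
contributes one affine function of `p`.
-/

open Set Filter Topology

section Polyhedron

variable {E ι : Type*} [AddCommGroup E] [Module ℝ E] [Finite ι]

theorem eq_of_mem_extremePoints_of_forall_eq_zero (A : AffineSubspace ℝ E)
    (f : ι → E →ₗ[ℝ] ℝ) {x y : E} (hx : x ∈ extremePoints ℝ {z | z ∈ A ∧ ∀ i, 0 ≤ f i z})
    (hy : y ∈ {z | z ∈ A ∧ ∀ i, 0 ≤ f i z}) (hxy : ∀ i, f i x = 0 → f i y = 0) : y = x := by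
  obtain ⟨⟨hxA, hx0⟩, hext⟩ := mem_extremePoints.1 hx
  have hev : ∀ᶠ t in 𝓝 (0 : ℝ), ∀ i, 0 ≤ f i (x + t • (x - y)) := by
    refine eventually_all.2 fun i => ?_
    simp only [map_add, map_smul, map_sub, smul_eq_mul]
    rcases (hx0 i).eq_or_lt with h | h
    · exact .of_forall fun t => by simp [← h, hxy i h.symm]
    · have hlim : Tendsto (fun t : ℝ => f i x + t * (f i x - f i y)) (𝓝 0) (𝓝 (f i x)) :=
        (continuous_const.add (continuous_id.mul continuous_const)).tendsto' _ _ (by simp)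
      exact (hlim.eventually_const_lt h).mono fun _ => le_of_lt
  obtain ⟨t, htK, ht⟩ := ((hev.filter_mono nhdsWithin_le_nhds).and
    (self_mem_nhdsWithin (s := Ioi (0 : ℝ)))).exists
  have hzA : x + t • (x - y) ∈ A := by
    convert AffineMap.lineMap_mem (1 + t) hy.1 hxA using 1
    rw [AffineMap.lineMap_apply_module]
    module
  have hseg : x ∈ openSegment ℝ y (x + t • (x - y)) := by
    have h1t : (0 : ℝ) < 1 + t := by linarith
    refine ⟨t / (1 + t), 1 / (1 + t), by positivity, by positivity, by field_simp; ring, ?_⟩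
    match_scalars <;> field_simp
    ring
  exact (hext y hy _ ⟨hzA, htK⟩ hseg).1

theorem finite_extremePoints_setOf_mem_and_nonneg (A : AffineSubspace ℝ E)
    (f : ι → E →ₗ[ℝ] ℝ) : (extremePoints ℝ {z | z ∈ A ∧ ∀ i, 0 ≤ f i z}).Finite := by
  refine Set.Finite.of_finite_image (f := fun x => {i | f i x = 0}) (Set.toFinite _) ?_
  intro x hx y hy hxy
  exact (eq_of_mem_extremePoints_of_forall_eq_zero A f hy hx.1 fun i hi =>
    (Set.ext_iff.1 hxy i).2 hi)

theorem exists_finset_convexHull_eq_of_isCompact [TopologicalSpace E] [T2Space E]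
    [IsTopologicalAddGroup E] [ContinuousSMul ℝ E] [LocallyConvexSpace ℝ E]
    (A : AffineSubspace ℝ E) (f : ι → E →ₗ[ℝ] ℝ)
    (hK : IsCompact {z | z ∈ A ∧ ∀ i, 0 ≤ f i z}) :
    ∃ W : Finset E, convexHull ℝ (W : Set E) = {z | z ∈ A ∧ ∀ i, 0 ≤ f i z} := by
  have hconv : Convex ℝ {z | z ∈ A ∧ ∀ i, 0 ≤ f i z} := fun x hx y hy s t hs ht hst =>
    ⟨A.convex hx.1 hy.1 hs ht hst, fun i => by
      simpa using add_nonneg (mul_nonneg hs (hx.2 i)) (mul_nonneg ht (hy.2 i))⟩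
  have hfin := finite_extremePoints_setOf_mem_and_nonneg A f
  refine ⟨hfin.toFinset, ?_⟩
  rw [hfin.coe_toFinset, ← (hfin.isClosed_convexHull ℝ).closure_eq,
    closure_convexHull_extremePoints hK hconv]

end Polyhedron

theorem neg_div_mem_Ioo_of_nonneg_of_neg {b m μ t t₁ t₂ : ℝ} (hμ : μ ∈ Ioo t₁ t₂)
    (ht : t ∈ Icc t₁ t₂) (h₀ : 0 ≤ b + m * μ) (h₁ : b + m * t < 0) : -b / m ∈ Ioo t₁ t₂ := by
  obtain ⟨hμ₁, hμ₂⟩ := hμ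
  obtain ⟨ht₁, ht₂⟩ := ht
  rcases lt_trichotomy m 0 with hm | rfl | hm
  · have hμt : μ < t := by nlinarith
    constructor
    · rw [lt_div_iff_of_neg hm]; nlinarith
    · rw [div_lt_iff_of_neg hm]; nlinarith
  · linarith
  · have htμ : t < μ := by nlinarith
    constructor
    · rw [lt_div_iff₀ hm]; nlinarith
    · rw [div_lt_iff₀ hm]; nlinarith

section ParametricLP

variable {E : Type*} [AddCommGroup E] [Module ℝ E] (W : Finset E) (a c : E →ₗ[ℝ] ℝ)

/-- `0` together with the nonnegative parameters `t` at which two points of `W` have the same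
value of `c + t • a`. -/
noncomputable def breakpoints : Finset ℝ :=
  (insert 0 ((W ×ˢ W).image fun uv => (c uv.1 - c uv.2) / (a uv.2 - a uv.1))).filter (0 ≤ ·)

variable {W a c}

theorem zero_mem_breakpoints : 0 ∈ breakpoints W a c := by
  simp [breakpoints]

theorem nonneg_of_mem_breakpoints {t : ℝ} (ht : t ∈ breakpoints W a c) : 0 ≤ t :=
  (Finset.mem_filter.1 ht).2

theorem div_mem_breakpoints {u w : E} (hu : u ∈ W) (hw : w ∈ W)
    (h : 0 ≤ (c u - c w) / (a w - a u)) : (c u - c w) / (a w - a u) ∈ breakpoints W a c :=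
  Finset.mem_filter.2 ⟨Finset.mem_insert_of_mem (Finset.mem_image.2
    ⟨(u, w), Finset.mem_product.2 ⟨hu, hw⟩, rfl⟩), h⟩

theorem isMinOn_of_breakpoints_disjoint_Ioo {u : E} {μ t t₁ t₂ : ℝ} (hu : u ∈ W)
    (ht₁ : 0 ≤ t₁) (hμ : μ ∈ Ioo t₁ t₂) (ht : t ∈ Icc t₁ t₂)
    (hgap : ∀ r ∈ breakpoints W a c, r ∉ Ioo t₁ t₂) (hmin : IsMinOn (c + μ • a) W u) :
    IsMinOn (c + t • a) W u := by
  refine isMinOn_iff.2 fun w hw => not_lt.1 fun hlt => ?_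
  have hμw := isMinOn_iff.1 hmin w hw
  simp only [LinearMap.add_apply, LinearMap.smul_apply, smul_eq_mul] at hμw hlt
  have hr := neg_div_mem_Ioo_of_nonneg_of_neg (b := c w - c u) (m := a w - a u) hμ ht
    (by linarith) (by linarith)
  rw [neg_sub] at hr
  exact hgap _ (div_mem_breakpoints hu hw (ht₁.trans hr.1.le)) hr

theorem exists_isMinOn_max'_breakpoints (hW : W.Nonempty) {p : ℝ} (hp : ∃ u ∈ W, a u ≤ p) :
    ∃ u ∈ W, a u ≤ p ∧
      IsMinOn (c + (breakpoints W a c).max' ⟨0, zero_mem_breakpoints⟩ • a) W u := by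
  set t₀ := (breakpoints W a c).max' ⟨0, zero_mem_breakpoints⟩
  obtain ⟨z, hzW, hz⟩ := W.exists_min_image (c + t₀ • a) hW
  by_cases hzp : a z ≤ p
  · exact ⟨z, hzW, hzp, isMinOn_iff.2 hz⟩
  obtain ⟨u, huW, hup⟩ := hp
  refine ⟨u, huW, hup, isMinOn_iff.2 fun w hw => le_trans (le_of_eq ?_) (hz w hw)⟩
  -- the breakpoint of the pair `(u, z)` is at least `t₀`, hence equal to it
  have hden : 0 < a z - a u := by linarith
  have hzu := hz u huW
  simp only [LinearMap.add_apply, LinearMap.smul_apply, smul_eq_mul] at hzu ⊢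
  have hle : t₀ ≤ (c u - c z) / (a z - a u) := by rw [le_div_iff₀ hden]; linarith
  have hmem := div_mem_breakpoints huW hzW
    ((nonneg_of_mem_breakpoints (Finset.max'_mem _ _)).trans hle)
  have heq : (c u - c z) / (a z - a u) = t₀ := le_antisymm (Finset.le_max' _ _ hmem) hle
  rw [div_eq_iff hden.ne'] at heq
  linear_combination heq

theorem exists_optimal_multiplier (hW : W.Nonempty) {p : ℝ} (hp : ∃ u ∈ W, a u ≤ p) :
    ∃ t ∈ breakpoints W a c, ∃ u ∈ W, a u ≤ p ∧ IsMinOn (c + t • a) W u ∧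
      (t = 0 ∨ ∃ v ∈ W, p ≤ a v ∧ IsMinOn (c + t • a) W v) := by
  classical
  set good := (breakpoints W a c).filter fun t : ℝ => ∃ u ∈ W, a u ≤ p ∧ IsMinOn (c + t • a) W u
  have hgood : good.Nonempty := by
    obtain ⟨u, hu⟩ := exists_isMinOn_max'_breakpoints hW hp
    exact ⟨_, Finset.mem_filter.2 ⟨Finset.max'_mem _ _, u, hu⟩⟩
  set t := good.min' hgood
  obtain ⟨htΛ, u, huW, hup, humin⟩ := Finset.mem_filter.1 (good.min'_mem hgood)
  refine ⟨t, htΛ, u, huW, hup, humin, ?_⟩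
  -- otherwise the minimisers just below `t` stay minimisers down to the previous breakpoint `s`,
  -- and one of them would put `s` into `good`
  by_contra! ⟨ht0, hv⟩
  have htpos : 0 < t := (nonneg_of_mem_breakpoints htΛ).lt_of_ne' ht0
  set below := (breakpoints W a c).filter (· < t)
  have hbelow : below.Nonempty := ⟨0, Finset.mem_filter.2 ⟨zero_mem_breakpoints, htpos⟩⟩
  set s := below.max' hbelow
  obtain ⟨hsΛ, hst⟩ := Finset.mem_filter.1 (below.max'_mem hbelow)
  have hs0 := nonneg_of_mem_breakpoints hsΛ
  have hgap : ∀ r ∈ breakpoints W a c, r ∉ Ioo s t := fun r hr ⟨hsr, hrt⟩ =>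
    (below.le_max' r (Finset.mem_filter.2 ⟨hr, hrt⟩)).not_gt hsr
  have hmid : (s + t) / 2 ∈ Ioo s t := ⟨by linarith, by linarith⟩
  obtain ⟨w, hwW, hw⟩ := W.exists_min_image (c + ((s + t) / 2) • a) hW
  have hwt := isMinOn_of_breakpoints_disjoint_Ioo hwW hs0 hmid ⟨hst.le, le_rfl⟩ hgap
    (isMinOn_iff.2 hw)
  have hws := isMinOn_of_breakpoints_disjoint_Ioo hwW hs0 hmid ⟨le_rfl, hst.le⟩ hgap
    (isMinOn_iff.2 hw)
  have hwp : a w ≤ p := (lt_of_not_ge fun h => hv w hwW h hwt).le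
  exact hst.not_ge (good.min'_le s (Finset.mem_filter.2 ⟨hsΛ, w, hwW, hwp, hws⟩))

theorem exists_mem_convexHull_eq_dual (hW : W.Nonempty) {p : ℝ} (hp : ∃ u ∈ W, a u ≤ p) :
    ∃ t ∈ breakpoints W a c, ∃ x ∈ convexHull ℝ (W : Set E), a x ≤ p ∧
      c x = W.inf' hW (c + t • a) - t * p := by
  obtain ⟨t, htΛ, u, huW, hup, humin, ht⟩ := exists_optimal_multiplier hW hp
  have hinf : W.inf' hW (c + t • a) = c u + t * a u :=
    le_antisymm (W.inf'_le _ huW) (W.le_inf' hW _ fun w hw => isMinOn_iff.1 humin w hw)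
  refine ⟨t, htΛ, ?_⟩
  rcases ht with rfl | ⟨v, hvW, hpv, hvmin⟩
  · exact ⟨u, subset_convexHull ℝ _ huW, hup, by rw [hinf]; ring⟩
  obtain ⟨x, hx, hxp⟩ : ∃ x ∈ segment ℝ u v, a x = p := by
    have : p ∈ a.toAffineMap '' segment ℝ u v := by
      rw [image_segment, LinearMap.coe_toAffineMap, segment_eq_Icc (hup.trans hpv)]
      exact ⟨hup, hpv⟩
    simpa using this
  have hLx : (c + t • a) x = (c + t • a) u := by
    have hLv : (c + t • a) v = (c + t • a) u :=
      le_antisymm (isMinOn_iff.1 hvmin u huW) (isMinOn_iff.1 humin v hvW)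
    have := mem_image_of_mem (c + t • a).toAffineMap hx
    rwa [image_segment, LinearMap.coe_toAffineMap, hLv, segment_same] at this
  refine ⟨x, segment_subset_convexHull huW hvW hx, hxp.le, ?_⟩
  simp only [LinearMap.add_apply, LinearMap.smul_apply, smul_eq_mul] at hLx
  rw [hinf, ← hxp]
  linarith

theorem inf'_le_of_mem_convexHull (hW : W.Nonempty) (φ : E →ₗ[ℝ] ℝ) {x : E}
    (hx : x ∈ convexHull ℝ (W : Set E)) : W.inf' hW φ ≤ φ x :=
  convexHull_min (fun _ hw => W.inf'_le φ hw) (convex_halfSpace_ge φ.isLinear _) hx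

theorem inf'_sub_mul_le (hW : W.Nonempty) {t p : ℝ} (ht : 0 ≤ t) {x : E}
    (hx : x ∈ convexHull ℝ (W : Set E)) (hxp : a x ≤ p) :
    W.inf' hW (c + t • a) - t * p ≤ c x := by
  have := inf'_le_of_mem_convexHull hW (c + t • a) hx
  simp only [LinearMap.add_apply, LinearMap.smul_apply, smul_eq_mul] at this ⊢
  nlinarith [mul_le_mul_of_nonneg_left hxp ht]

variable (a c) in
/-- The Lagrangian dual bounds `p ↦ -t * p + min_W (c + t • a)`, as (slope, intercept) pairs. -/
noncomputable def dualLines (hW : W.Nonempty) : Finset (ℝ × ℝ) :=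
  (breakpoints W a c).image fun t => (-t, W.inf' hW ⇑(c + t • a))

theorem dualLines_nonempty (hW : W.Nonempty) : (dualLines a c hW).Nonempty :=
  ⟨_, Finset.mem_image_of_mem _ zero_mem_breakpoints⟩

theorem isLeast_sup'_dualLines (hW : W.Nonempty) {p : ℝ}
    (hp : ∃ x ∈ convexHull ℝ (W : Set E), a x ≤ p) :
    IsLeast {d | ∃ x ∈ convexHull ℝ (W : Set E), a x ≤ p ∧ d = c x}
      ((dualLines a c hW).sup' (dualLines_nonempty hW) fun l => l.1 * p + l.2) := by
  set D := {d | ∃ x ∈ convexHull ℝ (W : Set E), a x ≤ p ∧ d = c x}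
  set V := (dualLines a c hW).sup' (dualLines_nonempty hW) fun l => l.1 * p + l.2
  have hpW : ∃ u ∈ W, a u ≤ p := by
    obtain ⟨x, hx, hxp⟩ := hp
    obtain ⟨u, hu, hmin⟩ := W.exists_mem_eq_inf' hW a
    exact ⟨u, hu, hmin ▸ (inf'_le_of_mem_convexHull hW a hx).trans hxp⟩
  have hlb : V ∈ lowerBounds D := by
    rintro _ ⟨y, hy, hyp, rfl⟩
    refine Finset.sup'_le _ _ fun l hl => ?_
    obtain ⟨t, ht, rfl⟩ := Finset.mem_image.1 hl
    have := inf'_sub_mul_le (c := c) hW (nonneg_of_mem_breakpoints ht) hy hyp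
    dsimp only
    linarith
  obtain ⟨t, htΛ, x, hx, hxp, hcx⟩ := exists_mem_convexHull_eq_dual hW hpW
  have hle : c x ≤ V :=
    Finset.le_sup'_of_le _ (Finset.mem_image_of_mem _ htΛ) (by dsimp only; linarith)
  exact ⟨⟨x, hx, hxp, le_antisymm (hlb ⟨x, hx, hxp, rfl⟩) hle⟩, hlb⟩

variable (W a c) in
theorem exists_finset_sInf_eq_sup' :
    ∃ (F : Finset (ℝ × ℝ)) (hF : F.Nonempty), ∀ p, (∃ x ∈ convexHull ℝ (W : Set E), a x ≤ p) →
      sInf {d | ∃ x ∈ convexHull ℝ (W : Set E), a x ≤ p ∧ d = c x} =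
        F.sup' hF fun l => l.1 * p + l.2 := by
  rcases W.eq_empty_or_nonempty with rfl | hW
  · exact ⟨{0}, Finset.singleton_nonempty 0, by simp⟩
  · exact ⟨_, _, fun p hp => (isLeast_sup'_dualLines hW hp).csInf_eq⟩

end ParametricLP

section LPPolytope

variable (Q S A : ℕ) (α : ℝ)

def boxWeightedSum (w : ℕ → ℕ → ℝ) : (ℕ → ℕ → ℝ) →ₗ[ℝ] ℝ where
  toFun x := ∑ q ∈ range (Q + 1), ∑ s ∈ range (S + 1), w q s * x q s
  map_add' x y := by simp only [Pi.add_apply, mul_add, sum_add_distrib]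
  map_smul' r x := by
    simp only [Pi.smul_apply, smul_eq_mul, RingHom.id_apply, mul_sum, mul_left_comm]

def lpAffine : AffineSubspace ℝ (ℕ → ℕ → ℝ) where
  carrier := {x | (∀ q s, (Q < q ∨ S < s) → x q s = 0) ∧
    (∀ q ≤ Q, ∀ s ≤ S, (s < sLo Q A q ∨ sHi S q < s) → x q s = 0) ∧
    (∑ q ∈ range (Q + 1), ∑ s ∈ range (S + 1), x q s = 1) ∧
    (∀ j ≤ Q,
      ∑ i ∈ range (Q + 1), ∑ s ∈ range (S + 1),
        x i s * (α * indArr A i s j + (1 - α) * indNoArr i s j)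
      = ∑ s ∈ range (S + 1), x j s)}
  smul_vsub_vadd_mem' r x y z := by
    rintro ⟨hx₀, hx₁, hx₂, hx₃⟩ ⟨hy₀, hy₁, hy₂, hy₃⟩ ⟨hz₀, hz₁, hz₂, hz₃⟩
    have hpt : ∀ q s, (r • (x -ᵥ y) +ᵥ z) q s = r * x q s + -r * y q s + z q s :=
      fun _ _ => by simp only [vsub_eq_sub, vadd_eq_add, Pi.add_apply, Pi.smul_apply,
        Pi.sub_apply, smul_eq_mul]; ring
    refine ⟨fun q s h => ?_, fun q hq s hs h => ?_, ?_, fun j hj => ?_⟩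
    · simp [hx₀ q s h, hy₀ q s h, hz₀ q s h]
    · simp [hx₁ q hq s hs h, hy₁ q hq s hs h, hz₁ q hq s hs h]
    · simp only [hpt, sum_add_distrib, ← mul_sum, hx₂, hy₂, hz₂]
      ring
    · simp only [hpt, add_mul, mul_assoc, sum_add_distrib, ← mul_sum]
      linear_combination r * hx₃ j hj - r * hy₃ j hj + hz₃ j hj

def coordLin (q s : ℕ) : (ℕ → ℕ → ℝ) →ₗ[ℝ] ℝ where
  toFun x := x q s
  map_add' _ _ := rfl
  map_smul' _ _ := rfl

/-- `IsLP` constrains only the coordinates in `[0, Q] × [0, S]`; making the others vanish turns the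
feasible set into a compact subset of `ℕ → ℕ → ℝ`. -/
def lpPolytope : Set (ℕ → ℕ → ℝ) :=
  {x | x ∈ lpAffine Q S A α ∧ ∀ k : Fin (Q + 1) × Fin (S + 1), 0 ≤ coordLin k.1 k.2 x}

variable {Q S A α}

theorem mem_lpPolytope_iff {x : ℕ → ℕ → ℝ} :
    x ∈ lpPolytope Q S A α ↔ IsLP Q S A α x ∧ ∀ q s, (Q < q ∨ S < s) → x q s = 0 := by
  constructor
  · rintro ⟨⟨h₀, h₁, h₂, h₃⟩, hnn⟩
    exact ⟨⟨fun q hq s hs => hnn (⟨q, by omega⟩, ⟨s, by omega⟩), h₁, h₂, h₃⟩, h₀⟩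
  · rintro ⟨⟨hnn, h₁, h₂, h₃⟩, h₀⟩
    exact ⟨⟨h₀, h₁, h₂, h₃⟩, fun k => hnn k.1 (by omega) k.2 (by omega)⟩

theorem isCompact_lpPolytope : IsCompact (lpPolytope Q S A α) := by
  refine (isCompact_univ_pi fun _ => isCompact_univ_pi fun _ => isCompact_Icc
    (a := (0 : ℝ)) (b := 1)).of_isClosed_subset ?_ fun x hx => ?_
  · rw [show lpPolytope Q S A α = {x | IsLP Q S A α x ∧ ∀ q s, (Q < q ∨ S < s) → x q s = 0} from
      Set.ext fun _ => mem_lpPolytope_iff]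
    simp only [IsLP, Set.ofPred_and, Set.ofPred_forall]
    repeat' first
      | apply IsClosed.inter
      | refine isClosed_iInter fun _ => ?_
      | apply isClosed_le
      | apply isClosed_eq
    all_goals fun_prop
  · obtain ⟨⟨hnn, -, hone, -⟩, hzero⟩ := mem_lpPolytope_iff.1 hx
    simp only [Set.mem_pi, Set.mem_univ, Set.mem_Icc, forall_const]
    intro q s
    by_cases h : Q < q ∨ S < s
    · simp [hzero q s h]
    push Not at h
    refine ⟨hnn q h.1 s h.2, hone ▸ ?_⟩
    have hrow : ∀ q' ∈ range (Q + 1), 0 ≤ ∑ s' ∈ range (S + 1), x q' s' := fun q' hq' =>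
      sum_nonneg fun s' hs' => hnn q' (by simpa [Nat.lt_succ_iff] using hq') s'
        (by simpa [Nat.lt_succ_iff] using hs')
    calc x q s ≤ ∑ s' ∈ range (S + 1), x q s' :=
          single_le_sum (fun s' hs' => hnn q h.1 s' (by simpa [Nat.lt_succ_iff] using hs'))
            (mem_range.2 (by omega))
      _ ≤ _ := single_le_sum hrow (mem_range.2 (by omega))

theorem exists_finset_convexHull_eq_lpPolytope :
    ∃ W : Finset (ℕ → ℕ → ℝ), convexHull ℝ (W : Set (ℕ → ℕ → ℝ)) = lpPolytope Q S A α :=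
  exists_finset_convexHull_eq_of_isCompact (lpAffine Q S A α)
    (fun k : Fin (Q + 1) × Fin (S + 1) => coordLin k.1 k.2) isCompact_lpPolytope

theorem exists_mem_lpPolytope (P : ℕ → ℝ) {x : ℕ → ℕ → ℝ} (hx : IsLP Q S A α x) :
    ∃ y ∈ lpPolytope Q S A α,
      powerLP Q S P y = powerLP Q S P x ∧ delayLP Q S A α y = delayLP Q S A α x := by
  set y : ℕ → ℕ → ℝ := fun q s => if q ≤ Q ∧ s ≤ S then x q s else 0
  have hy : ∀ q ≤ Q, ∀ s ≤ S, y q s = x q s := fun q hq s hs => if_pos ⟨hq, hs⟩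
  have hsum : ∀ g : ℕ → ℕ → ℝ → ℝ, ∑ q ∈ range (Q + 1), ∑ s ∈ range (S + 1), g q s (y q s) =
      ∑ q ∈ range (Q + 1), ∑ s ∈ range (S + 1), g q s (x q s) := fun g =>
    sum_congr rfl fun q hq => sum_congr rfl fun s hs => by
      rw [hy q (Nat.lt_succ_iff.1 (mem_range.1 hq)) s (Nat.lt_succ_iff.1 (mem_range.1 hs))]
  obtain ⟨hnn, hzero, hone, hbal⟩ := hx
  refine ⟨y, mem_lpPolytope_iff.2 ⟨⟨fun q hq s hs => ?_, fun q hq s hs h => ?_, ?_, fun j hj => ?_⟩,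
    fun q s h => if_neg (by omega)⟩, hsum fun _ s v => P s * v, ?_⟩
  · rw [hy q hq s hs]; exact hnn q hq s hs
  · rw [hy q hq s hs]; exact hzero q hq s hs h
  · exact (hsum fun _ _ v => v).trans hone
  · rw [hsum fun i s v => v * (α * indArr A i s j + (1 - α) * indNoArr i s j),
      sum_congr rfl fun s hs => hy j hj s (Nat.lt_succ_iff.1 (mem_range.1 hs))]
    exact hbal j hj
  · simp only [delayLP]
    rw [hsum fun q _ v => (q : ℝ) * v]

end LPPolytope

theorem tradeoff_piecewise_linear_general
    (Q S A : ℕ) (α : ℝ) (P : ℕ → ℝ)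
    (V : ℝ → ℝ)
    (hV : ∀ p, V p = sInf {d : ℝ | ∃ x, IsLP Q S A α x ∧
        powerLP Q S P x ≤ p ∧ d = delayLP Q S A α x})
    (Dom : Set ℝ)
    (hDom : Dom = {p : ℝ | ∃ x, IsLP Q S A α x ∧ powerLP Q S P x ≤ p}) :
    ∃ (F : Finset (ℝ × ℝ)) (hF : F.Nonempty),
      ∀ p ∈ Dom, V p = F.sup' hF (fun ab => ab.1 * p + ab.2) := by
  obtain ⟨W, hW⟩ := exists_finset_convexHull_eq_lpPolytope (Q := Q) (S := S) (A := A) (α := α)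
  obtain ⟨F, hF, hFW⟩ := exists_finset_sInf_eq_sup' W (boxWeightedSum Q S fun _ s => P s)
    ((1 / (A * α)) • boxWeightedSum Q S fun q _ => q)
  refine ⟨F, hF, fun p hp => ?_⟩
  rw [hW] at hFW
  have hset : {d : ℝ | ∃ x, IsLP Q S A α x ∧ powerLP Q S P x ≤ p ∧ d = delayLP Q S A α x} =
      {d | ∃ x ∈ lpPolytope Q S A α, powerLP Q S P x ≤ p ∧ d = delayLP Q S A α x} := by
    ext d
    constructor
    · rintro ⟨x, hx, hxp, rfl⟩
      obtain ⟨y, hy, hpy, hdy⟩ := exists_mem_lpPolytope P hx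
      exact ⟨y, hy, hpy ▸ hxp, hdy.symm⟩
    · rintro ⟨x, hx, hxp, rfl⟩
      exact ⟨x, (mem_lpPolytope_iff.1 hx).1, hxp, rfl⟩
  rw [hV, hset]
  refine hFW p ?_
  obtain ⟨x, hx, hxp⟩ := hDom ▸ hp
  obtain ⟨y, hy, hpy, -⟩ := exists_mem_lpPolytope P hx
  exact ⟨y, hy, hpy.trans_le hxp⟩

/-- The optimal delay-power tradeoff function `V` is piecewise linear
on its domain: it is the pointwise maximum of finitely many affine functions. -/
theorem tradeoff_piecewise_linear
    (Q S A : ℕ) (α : ℝ) (P : ℕ → ℝ)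
    (hA : 1 ≤ A) (hAS : A ≤ S) (hSQ : S ≤ Q)
    (hα0 : 0 < α) (hα1 : α < 1)
    (hP : ∀ s ≤ S, 0 ≤ P s)
    (V : ℝ → ℝ)
    (hV : ∀ p, V p = sInf {d : ℝ | ∃ x, IsLP Q S A α x ∧
        powerLP Q S P x ≤ p ∧ d = delayLP Q S A α x})
    (Dom : Set ℝ)
    (hDom : Dom = {p : ℝ | ∃ x, IsLP Q S A α x ∧ powerLP Q S P x ≤ p}) :
    ∃ (F : Finset (ℝ × ℝ)) (hF : F.Nonempty),
      ∀ p ∈ Dom, V p = F.sup' hF (fun ab => ab.1 * p + ab.2) :=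
  tradeoff_piecewise_linear_general Q S A α P V hV Dom hDom
end

section
/- Fix a real Pth and suppose x* is an LP point with P̄(x*) ≤ Pth that minimizes D over all LP points x with P̄(x) ≤ Pth. Define π*_q = Σ_{s=0}^{S} x*_{q,s} and the policy f* by f*_{q,s} = x*_{q,s}/π*_q if π*_q > 0 and f*_{q,s} = 1{s = s_q^max} if π*_q = 0, and let M be the (Q+1)×(Q+1) transition matrix with entries M_{i,j} = λ*_{i,j} = Σ_{s=0}^{S} f*_{i,s}·( α·1{i−s+A = j} + (1−α)·1{i−s = j} ). Write i ⇝ j iff there exists n ≥ 0 with (M^n)_{i,j} > 0, and call a state i ∈ {0,…,Q} recurrent iff for every j, i ⇝ j implies j ⇝ i. Then the Markov chain with transition matrix M has exactly one recurrent closed class: the set of recurrent states is nonempty, and any two recurrent states i, j satisfy i ⇝ j. -/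
/-!
Every state of the chain reaches `0`. Let `m` be the lowest state reachable from a given state.
If `π*_m = 0`, the policy serves `s_m^max = min S m` packets at `m` and the queue can drop
below `m` unless `m = 0`. If `π*_m > 0`, the states reachable from `m` form a set that no mass
of `x*` enters or leaves (states of positive stationary mass are recurrent). Moving the LP mass
on that set down by `m` gives an LP point with the same power and a delay smaller by
`m · (mass of the set) / (A α)`, so optimality forces `m = 0`. Hence `0` is recurrent, and
recurrent states `i`, `j` satisfy `i ⇝ 0 ⇝ j`.
-/

open Finset

open Relation Matrix

theorem Relation.exists_reflTransGen_forall_reflTransGen_le {α : Type*} [LinearOrder α]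
    [WellFoundedLT α] (r : α → α → Prop) (a : α) :
    ∃ m, ReflTransGen r a m ∧ ∀ b, ReflTransGen r m b → m ≤ b := by
  obtain ⟨m, ham, hmin⟩ := wellFounded_lt.has_min {b | ReflTransGen r a b} ⟨a, .refl⟩
  exact ⟨m, ham, fun b hmb => not_lt.1 (hmin b (ham.trans hmb))⟩

namespace Matrix

variable {ι : Type*} [Fintype ι] [DecidableEq ι] {M : Matrix ι ι ℝ}

theorem exists_pow_apply_pos_iff_reflTransGen (hM : ∀ i j, 0 ≤ M i j) {i j : ι} :
    (∃ n, 0 < (M ^ n) i j) ↔ ReflTransGen (0 < M · ·) i j := by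
  have hterm (n : ℕ) (k : ι) (l : ι) : 0 ≤ (M ^ n) i l * M l k :=
    mul_nonneg (pow_apply_nonneg hM n i l) (hM l k)
  constructor
  · rintro ⟨n, hn⟩
    induction n generalizing j with
    | zero =>
      rcases eq_or_ne i j with rfl | hij
      · exact .refl
      · simp [one_apply_ne hij] at hn
    | succ n ih =>
      rw [pow_succ, mul_apply] at hn
      obtain ⟨l, -, hl⟩ := (sum_pos_iff_of_nonneg fun l _ => hterm n j l).1 hn
      exact (ih (pos_of_mul_pos_left hl (hM l j))).tail
        (pos_of_mul_pos_right hl (pow_apply_nonneg hM n i l))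
  · intro h
    induction h with
    | refl => exact ⟨0, by simp⟩
    | tail _ hbc ih =>
      obtain ⟨n, hn⟩ := ih
      refine ⟨n + 1, ?_⟩
      rw [pow_succ, mul_apply]
      exact (sum_pos_iff_of_nonneg fun l _ => hterm n _ l).2 ⟨_, mem_univ _, mul_pos hn hbc⟩

variable {π : ι → ℝ}

theorem pos_of_vecMul_eq_self (hM : M ∈ rowStochastic ℝ ι) (hπ0 : ∀ i, 0 ≤ π i)
    (hπ : π ᵥ* M = π) {i j : ι} (hi : 0 < π i) (hij : 0 < M i j) : 0 < π j := by
  rw [← hπ]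
  exact (sum_pos_iff_of_nonneg fun k _ => mul_nonneg (hπ0 k) (nonneg_of_mem_rowStochastic hM)).2
    ⟨i, mem_univ _, mul_pos hi hij⟩

/-- `V` keeps all of its own mass, so stationarity leaves no room for inflow. -/
theorem mul_eq_zero_of_vecMul_eq_self (hM : M ∈ rowStochastic ℝ ι) (hπ0 : ∀ i, 0 ≤ π i)
    (hπ : π ᵥ* M = π) {V : Finset ι} (hV : ∀ k ∈ V, ∀ l ∉ V, M k l = 0) {k l : ι}
    (hk : k ∉ V) (hl : l ∈ V) : π k * M k l = 0 := by
  have hrowV : ∀ a ∈ V, ∑ b ∈ V, M a b = 1 := fun a ha => by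
    rw [← sum_row_of_mem_rowStochastic hM a]
    exact sum_subset (subset_univ V) fun b _ hb => hV a ha b hb
  have hflow : ∑ a ∈ Vᶜ, π a * ∑ b ∈ V, M a b = 0 := by
    have hbal : ∑ b ∈ V, π b = ∑ a, π a * ∑ b ∈ V, M a b := by
      simp_rw [mul_sum]
      rw [sum_comm]
      exact sum_congr rfl fun b _ => (congrFun hπ b).symm
    have hin : ∑ a ∈ V, π a * ∑ b ∈ V, M a b = ∑ a ∈ V, π a :=
      sum_congr rfl fun a ha => by rw [hrowV a ha, mul_one]
    rw [← sum_add_sum_compl V, hin] at hbal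
    linarith
  have hM0 : ∀ a b, 0 ≤ M a b := fun _ _ => nonneg_of_mem_rowStochastic hM
  have hkV : π k * ∑ b ∈ V, M k b = 0 := (sum_eq_zero_iff_of_nonneg fun a _ =>
    mul_nonneg (hπ0 a) (sum_nonneg fun b _ => hM0 a b)).1 hflow k (mem_compl.2 hk)
  refine le_antisymm ?_ (mul_nonneg (hπ0 k) (hM0 k l))
  exact hkV ▸ mul_le_mul_of_nonneg_left (single_le_sum (fun b _ => hM0 k b) hl) (hπ0 k)

/-- States of positive stationary mass are recurrent. -/
theorem reflTransGen_swap_of_vecMul_eq_self (hM : M ∈ rowStochastic ℝ ι)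
    (hπ0 : ∀ i, 0 ≤ π i) (hπ : π ᵥ* M = π) {i j : ι} (hi : 0 < π i)
    (hij : ReflTransGen (0 < M · ·) i j) : ReflTransGen (0 < M · ·) j i := by
  classical
  set V := univ.filter fun l => ¬ ReflTransGen (0 < M · ·) l i
  have hV : ∀ k ∈ V, ∀ l ∉ V, M k l = 0 := by
    intro k hk l hl
    simp only [V, mem_filter, mem_univ, true_and, not_not] at hk hl
    by_contra hne
    exact hk (.head ((nonneg_of_mem_rowStochastic hM).lt_of_ne' hne) hl)
  suffices 0 < π j ∧ ReflTransGen (0 < M · ·) j i from this.2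
  induction hij with
  | refl => exact ⟨hi, .refl⟩
  | @tail b c _ hbc ih =>
    refine ⟨pos_of_vecMul_eq_self hM hπ0 hπ ih.1 hbc, ?_⟩
    by_contra hc
    refine (mul_pos ih.1 hbc).ne' (mul_eq_zero_of_vecMul_eq_self hM hπ0 hπ hV ?_ ?_)
    · simpa [V] using ih.2
    · simpa [V] using hc

end Matrix

section SlotKernel

variable {Q S A : ℕ} {α : ℝ}

noncomputable def slotKernel (A : ℕ) (α : ℝ) (i s j : ℕ) : ℝ :=
  α * indArr A i s j + (1 - α) * indNoArr i s j

lemma indArr_of_le {i s : ℕ} (hs : s ≤ i) (j : ℕ) :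
    indArr A i s j = if i - s + A = j then 1 else 0 := by
  unfold indArr; split_ifs <;> first | rfl | omega

lemma indNoArr_of_le {i s : ℕ} (hs : s ≤ i) (j : ℕ) :
    indNoArr i s j = if i - s = j then 1 else 0 := by
  unfold indNoArr; split_ifs <;> first | rfl | omega

lemma slotKernel_nonneg (hα0 : 0 ≤ α) (hα1 : α ≤ 1) (i s j : ℕ) : 0 ≤ slotKernel A α i s j := by
  unfold slotKernel indArr indNoArr; split_ifs <;> linarith

lemma slotKernel_add_add (i s j t : ℕ) :
    slotKernel A α (i + t) s (j + t) = slotKernel A α i s j := by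
  unfold slotKernel indArr indNoArr; push_cast
  congr 2 <;> apply if_congr _ rfl rfl <;> omega

lemma eq_sub_or_eq_sub_add_of_slotKernel_ne_zero {i s j : ℕ} (hs : s ≤ i)
    (h : slotKernel A α i s j ≠ 0) : j = i - s ∨ j = i - s + A := by
  by_contra! hj
  simp [slotKernel, indArr_of_le hs, indNoArr_of_le hs, Ne.symm hj.1, Ne.symm hj.2] at h

lemma one_sub_le_slotKernel (hα0 : 0 ≤ α) {i s : ℕ} (hs : s ≤ i) :
    1 - α ≤ slotKernel A α i s (i - s) := by
  have h : 0 ≤ α * indArr A i s (i - s) := mul_nonneg hα0 (by unfold indArr; split_ifs <;> norm_num)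
  rw [slotKernel, indNoArr_of_le hs, if_pos rfl]
  linarith

lemma le_slotKernel (hα1 : α ≤ 1) {i s : ℕ} (hs : s ≤ i) :
    α ≤ slotKernel A α i s (i - s + A) := by
  have h : 0 ≤ (1 - α) * indNoArr i s (i - s + A) :=
    mul_nonneg (by linarith) (by unfold indNoArr; split_ifs <;> norm_num)
  rw [slotKernel, indArr_of_le hs, if_pos rfl]
  linarith

lemma sum_slotKernel {i s : ℕ} (hs : s ≤ i) (hQ : i - s + A ≤ Q) :
    ∑ j ∈ range (Q + 1), slotKernel A α i s j = 1 := by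
  simp only [slotKernel, indArr_of_le hs, indNoArr_of_le hs, sum_add_distrib, ← mul_sum,
    sum_ite_eq, mem_range]
  rw [if_pos (by omega), if_pos (by omega)]
  ring

lemma le_of_support {z : ℕ → ℕ → ℝ}
    (hz : ∀ q ≤ Q, ∀ s ≤ S, (s < sLo Q A q ∨ sHi S q < s) → z q s = 0)
    {q s : ℕ} (hq : q ≤ Q) (hs : s ≤ S) (h : z q s ≠ 0) : s ≤ q := by
  by_contra hc
  exact h (hz q hq s hs (Or.inr (by simp only [sHi]; omega)))

lemma sub_add_le_of_support {z : ℕ → ℕ → ℝ}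
    (hz : ∀ q ≤ Q, ∀ s ≤ S, (s < sLo Q A q ∨ sHi S q < s) → z q s = 0) (hAQ : A ≤ Q)
    {q s : ℕ} (hq : q ≤ Q) (hs : s ≤ S) (h : z q s ≠ 0) : q - s + A ≤ Q := by
  by_contra hc
  exact h (hz q hq s hs (Or.inl (by simp only [sLo]; omega)))

end SlotKernel

section Policy

variable {Q S A : ℕ} {α : ℝ} {f : ℕ → ℕ → ℝ}

lemma lam_eq_sum_slotKernel (i j : ℕ) :
    lam S A α f i j = ∑ s ∈ range (S + 1), f i s * slotKernel A α i s j := rfl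

lemma IsPolicy.mul_slotKernel_le_lam (hf : IsPolicy Q S A f) (hα0 : 0 ≤ α) (hα1 : α ≤ 1) {i s : ℕ}
    (hi : i ≤ Q) (hs : s ≤ S) (j : ℕ) : f i s * slotKernel A α i s j ≤ lam S A α f i j :=
  single_le_sum (f := fun t => f i t * slotKernel A α i t j)
    (fun t ht => mul_nonneg (hf.1 i hi t (mem_range_succ_iff.1 ht))
      (slotKernel_nonneg hα0 hα1 ..))
    (mem_range_succ_iff.2 hs)

lemma IsPolicy.lam_nonneg (hf : IsPolicy Q S A f) (hα0 : 0 ≤ α) (hα1 : α ≤ 1) {i : ℕ} (hi : i ≤ Q)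
    (j : ℕ) : 0 ≤ lam S A α f i j :=
  sum_nonneg fun s hs => mul_nonneg (hf.1 i hi s (mem_range_succ_iff.1 hs))
    (slotKernel_nonneg hα0 hα1 ..)

lemma IsPolicy.sum_lam (hf : IsPolicy Q S A f) (hAQ : A ≤ Q) {i : ℕ} (hi : i ≤ Q) :
    ∑ j ∈ range (Q + 1), lam S A α f i j = 1 := by
  simp_rw [lam_eq_sum_slotKernel]
  rw [sum_comm, ← hf.2.1 i hi]
  refine sum_congr rfl fun s hs => ?_
  have hsS : s ≤ S := mem_range_succ_iff.1 hs
  by_cases h : f i s = 0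
  · simp [h]
  rw [← mul_sum, sum_slotKernel (le_of_support hf.2.2 hi hsS h)
    (sub_add_le_of_support hf.2.2 hAQ hi hsS h), mul_one]

/-- Serving `s` packets moves the queue to `i - s` (no arrival) or to `i - s + A` (arrival). -/
lemma IsPolicy.lam_pos (hf : IsPolicy Q S A f) (hα0 : 0 < α) (hα1 : α < 1) {i s j : ℕ} (hi : i ≤ Q)
    (hs : s ≤ S) (hfs : f i s ≠ 0) (hj : j = i - s ∨ j = i - s + A) : 0 < lam S A α f i j := by
  have hsi := le_of_support hf.2.2 hi hs hfs
  have hk : 0 < slotKernel A α i s j := by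
    rcases hj with rfl | rfl
    · linarith [one_sub_le_slotKernel (A := A) hα0.le hsi]
    · linarith [le_slotKernel (A := A) hα1.le hsi]
  exact (mul_pos ((hf.1 i hi s hs).lt_of_ne' hfs) hk).trans_le
    (hf.mul_slotKernel_le_lam hα0.le hα1.le hi hs j)

lemma IsPolicy.mem_rowStochastic (hf : IsPolicy Q S A f) (hα0 : 0 ≤ α) (hα1 : α ≤ 1)
    (hAQ : A ≤ Q) {M : Matrix (Fin (Q + 1)) (Fin (Q + 1)) ℝ}
    (hM : ∀ i j : Fin (Q + 1), M i j = lam S A α f i j) :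
    M ∈ Matrix.rowStochastic ℝ (Fin (Q + 1)) := by
  refine Matrix.mem_rowStochastic_iff_sum.2 ⟨fun i j => ?_, fun i => ?_⟩
  · rw [hM]; exact hf.lam_nonneg hα0 hα1 i.is_le j
  · simp_rw [hM]
    rw [Fin.sum_univ_eq_sum_range (lam S A α f i ·), hf.sum_lam hAQ i.is_le]

lemma IsStationaryQueue.vecMul_eq_self {pi : ℕ → ℝ} (hpi : IsStationaryQueue Q S A α f pi)
    {M : Matrix (Fin (Q + 1)) (Fin (Q + 1)) ℝ}
    (hM : ∀ i j : Fin (Q + 1), M i j = lam S A α f i j) :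
    (fun i : Fin (Q + 1) => pi i) ᵥ* M = fun i : Fin (Q + 1) => pi i := by
  funext j
  simp only [Matrix.vecMul, dotProduct, hM, mul_comm (pi _)]
  rw [Fin.sum_univ_eq_sum_range (fun i => lam S A α f i j * pi i),
    ← hpi.2.2 j j.is_le]

end Policy

section LPPoint

variable {Q S A : ℕ} {α : ℝ} {x f : ℕ → ℕ → ℝ} {pi : ℕ → ℝ}

lemma IsLP.le_pi (hx : IsLP Q S A α x) (hpi : ∀ q, pi q = ∑ s ∈ range (S + 1), x q s)
    {q s : ℕ} (hq : q ≤ Q) (hs : s ≤ S) : x q s ≤ pi q :=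
  hpi q ▸ single_le_sum (fun t ht => hx.1 q hq t (mem_range_succ_iff.1 ht))
    (mem_range_succ_iff.2 hs)

lemma IsLP.eq_mul_pi (hx : IsLP Q S A α x) (hpi : ∀ q, pi q = ∑ s ∈ range (S + 1), x q s)
    (hf : ∀ q s, f q s = if 0 < pi q then x q s / pi q else if s = sHi S q then 1 else 0)
    {q s : ℕ} (hq : q ≤ Q) (hs : s ≤ S) : x q s = f q s * pi q := by
  by_cases hpq : 0 < pi q
  · rw [hf, if_pos hpq, div_mul_cancel₀ _ hpq.ne']
  · have hpq0 : pi q = 0 := le_antisymm (not_lt.1 hpq) ((hx.1 q hq s hs).trans (hx.le_pi hpi hq hs))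
    rw [hpq0, mul_zero]
    exact le_antisymm (hpq0 ▸ hx.le_pi hpi hq hs) (hx.1 q hq s hs)

lemma IsLP.isPolicy (hx : IsLP Q S A α x) (hAS : A ≤ S)
    (hpi : ∀ q, pi q = ∑ s ∈ range (S + 1), x q s)
    (hf : ∀ q s, f q s = if 0 < pi q then x q s / pi q else if s = sHi S q then 1 else 0) :
    IsPolicy Q S A f := by
  refine ⟨fun q hq s hs => ?_, fun q hq => ?_, fun q hq s hs hout => ?_⟩ <;>
    by_cases hpq : 0 < pi q
  · rw [hf, if_pos hpq]; exact div_nonneg (hx.1 q hq s hs) hpq.le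
  · rw [hf, if_neg hpq]; split_ifs <;> norm_num
  · simp_rw [hf, if_pos hpq, ← sum_div, ← hpi, div_self hpq.ne']
  · simp_rw [hf, if_neg hpq]
    rw [sum_ite_eq']
    exact if_pos (mem_range_succ_iff.2 (min_le_left S q))
  · rw [hf, if_pos hpq, hx.2.1 q hq s hs hout, zero_div]
  · rw [hf, if_neg hpq, if_neg]
    rintro rfl
    simp only [sLo, sHi] at hout
    omega

lemma IsLP.isStationaryQueue (hx : IsLP Q S A α x)
    (hpi : ∀ q, pi q = ∑ s ∈ range (S + 1), x q s)
    (hf : ∀ q s, f q s = if 0 < pi q then x q s / pi q else if s = sHi S q then 1 else 0) :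
    IsStationaryQueue Q S A α f pi := by
  refine ⟨fun q hq => ?_, ?_, fun j hj => ?_⟩
  · rw [hpi]; exact sum_nonneg fun s hs => hx.1 q hq s (mem_range_succ_iff.1 hs)
  · simp_rw [hpi]; exact hx.2.2.1
  · rw [hpi, ← hx.2.2.2 j hj]
    refine sum_congr rfl fun i hi => ?_
    rw [lam_eq_sum_slotKernel, sum_mul]
    refine sum_congr rfl fun s hs => ?_
    rw [hx.eq_mul_pi hpi hf (mem_range_succ_iff.1 hi) (mem_range_succ_iff.1 hs),
      slotKernel]
    ring

end LPPoint

lemma sum_range_add_eq_of_support {M : Type*} [AddCommMonoid M] {g : ℕ → M} {m Q : ℕ} (hg : ∀ k, g k ≠ 0 → m ≤ k ∧ k ≤ Q) :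
    ∑ q ∈ range (Q + 1), g (q + m) = ∑ k ∈ range (Q + 1), g k := by
  have hlow : ∑ k ∈ range m, g k = 0 := sum_eq_zero fun k hk => by
    by_contra h
    have := hg k h
    simp only [mem_range] at hk
    omega
  have hhigh : ∑ k ∈ range (m + (Q + 1)), g k = ∑ k ∈ range (Q + 1), g k := by
    refine (sum_subset (range_subset_range.2 (by omega)) fun k _ hk => ?_).symm
    by_contra h
    have := hg k h
    simp only [mem_range] at hk
    omega
  rw [← hhigh, sum_range_add g m (Q + 1), hlow, zero_add]
  simp_rw [add_comm m]

section Shift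

variable {Q S A : ℕ} {α : ℝ} {x : ℕ → ℕ → ℝ}

/-- Mass, power, delay and the balance equations of the LP are all of this form. -/
noncomputable def weightedSum (Q S : ℕ) (φ z : ℕ → ℕ → ℝ) : ℝ :=
  ∑ q ∈ range (Q + 1), ∑ s ∈ range (S + 1), φ q s * z q s

noncomputable def shiftDown (C : Set ℕ) (m : ℕ) (x : ℕ → ℕ → ℝ) : ℕ → ℕ → ℝ :=
  fun q s => x q s - C.indicator x q s + C.indicator x (q + m) s

/-- No mass of `x` moves between `C` and its complement in one slot. -/
def IsInvariantSet (Q S A : ℕ) (x : ℕ → ℕ → ℝ) (C : Set ℕ) : Prop :=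
  ∀ q ≤ Q, ∀ s ≤ S, x q s ≠ 0 → (q - s ∈ C ↔ q ∈ C) ∧ (q - s + A ∈ C ↔ q ∈ C)

lemma weightedSum_slotKernel_eq_sum (z : ℕ → ℕ → ℝ) (j : ℕ) :
    weightedSum Q S (fun q s => slotKernel A α q s j) z =
      ∑ i ∈ range (Q + 1), ∑ s ∈ range (S + 1),
        z i s * (α * indArr A i s j + (1 - α) * indNoArr i s j) :=
  sum_congr rfl fun _ _ => sum_congr rfl fun _ _ => mul_comm _ _

lemma weightedSum_shiftDown {C : Set ℕ} {m : ℕ} (hC : ∀ q ∈ C, m ≤ q ∧ q ≤ Q)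
    {φ ψ : ℕ → ℕ → ℝ} (hψ : ∀ q s, ψ (q + m) s = φ q s) :
    weightedSum Q S φ (shiftDown C m x) = weightedSum Q S φ x
      - weightedSum Q S φ (C.indicator x) + weightedSum Q S ψ (C.indicator x) := by
  have hshift : weightedSum Q S φ (fun q s => C.indicator x (q + m) s) =
      weightedSum Q S ψ (C.indicator x) := by
    simp only [weightedSum, ← hψ]
    refine sum_range_add_eq_of_support
      (g := fun k => ∑ s ∈ range (S + 1), ψ k s * C.indicator x k s) fun k hk => hC k ?_
    by_contra hkC
    simp [Set.indicator_of_notMem hkC] at hk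
  rw [← hshift]
  simp only [weightedSum, shiftDown, mul_add, mul_sub, sum_add_distrib, sum_sub_distrib]

lemma weightedSum_shiftDown_of_forall_eq {C : Set ℕ} {m : ℕ} (hC : ∀ q ∈ C, m ≤ q ∧ q ≤ Q)
    (g : ℕ → ℝ) : weightedSum Q S (fun _ s => g s) (shiftDown C m x) =
      weightedSum Q S (fun _ s => g s) x := by
  rw [weightedSum_shiftDown hC (ψ := fun _ s => g s) fun _ _ => rfl]
  ring

/-- The restriction of `x` to an invariant set is again balanced, at every state. -/
lemma weightedSum_slotKernel_indicator (hx : IsLP Q S A α x) {C : Set ℕ}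
    (hCQ : ∀ q ∈ C, q ≤ Q) (hCx : IsInvariantSet Q S A x C) (c : ℕ) :
    weightedSum Q S (fun q s => slotKernel A α q s c) (C.indicator x) =
      ∑ s ∈ range (S + 1), C.indicator x c s := by
  classical
  have hpt : ∀ q ≤ Q, ∀ s ≤ S, slotKernel A α q s c * C.indicator x q s =
      if c ∈ C then slotKernel A α q s c * x q s else 0 := by
    intro q hq s hs
    by_cases hxs : x q s = 0
    · by_cases hq' : q ∈ C <;> simp [hq', hxs]
    by_cases hk : slotKernel A α q s c = 0
    · simp [hk]
    have hcq : c ∈ C ↔ q ∈ C := by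
      rcases eq_sub_or_eq_sub_add_of_slotKernel_ne_zero (le_of_support hx.2.1 hq hs hxs) hk
        with rfl | rfl
      exacts [(hCx q hq s hs hxs).1, (hCx q hq s hs hxs).2]
    simp only [Set.indicator_apply, hcq]
    split_ifs <;> simp
  rw [weightedSum, sum_congr rfl fun q hq => sum_congr rfl fun s hs =>
    hpt q (mem_range_succ_iff.1 hq) s (mem_range_succ_iff.1 hs)]
  by_cases hc : c ∈ C
  · simp only [if_pos hc, Set.indicator_of_mem hc]
    rw [← weightedSum, weightedSum_slotKernel_eq_sum]
    exact hx.2.2.2 c (hCQ c hc)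
  · simp [hc]

lemma isLP_shiftDown (hx : IsLP Q S A α x) {C : Set ℕ} {m : ℕ}
    (hC : ∀ q ∈ C, m ≤ q ∧ q ≤ Q) (hCx : IsInvariantSet Q S A x C) :
    IsLP Q S A α (shiftDown C m x) := by
  refine ⟨fun q hq s hs => ?_, fun q hq s hs hout => ?_, ?_, fun j hj => ?_⟩
  · have h0 : 0 ≤ x q s - C.indicator x q s := by
      by_cases hq' : q ∈ C <;> simp [hq', hx.1 q hq s hs]
    have h1 : 0 ≤ C.indicator x (q + m) s := by
      by_cases hq' : q + m ∈ C
      · simpa [hq'] using hx.1 _ (hC _ hq').2 s hs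
      · simp [hq']
    exact add_nonneg h0 h1
  · have hx0 : x q s = 0 := hx.2.1 q hq s hs hout
    have hq0 : C.indicator x q s = 0 := by by_cases hq' : q ∈ C <;> simp [hq', hx0]
    suffices C.indicator x (q + m) s = 0 by simp [shiftDown, hx0, hq0, this]
    by_contra hne
    have hqm : q + m ∈ C := by
      by_contra h
      simp [Set.indicator_of_notMem h] at hne
    rw [Set.indicator_of_mem hqm] at hne
    have hqmQ := (hC _ hqm).2
    have hsub := (hC _ ((hCx _ hqmQ s hs hne).1.2 hqm)).1
    have hsle := le_of_support hx.2.1 hqmQ hs hne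
    have hlo : ¬ s < sLo Q A (q + m) := fun h => hne (hx.2.1 _ hqmQ s hs (Or.inl h))
    simp only [sLo, sHi] at hout hlo
    omega
  · have h := weightedSum_shiftDown_of_forall_eq (S := S) (x := x) hC fun _ => 1
    simp only [weightedSum, one_mul] at h
    rw [h]
    exact hx.2.2.1
  · have hCQ : ∀ q ∈ C, q ≤ Q := fun q hq => (hC q hq).2
    rw [← weightedSum_slotKernel_eq_sum,
      weightedSum_shiftDown hC (ψ := fun q s => slotKernel A α q s (j + m))
        fun q s => slotKernel_add_add q s j m,
      weightedSum_slotKernel_indicator hx hCQ hCx, weightedSum_slotKernel_indicator hx hCQ hCx,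
      weightedSum_slotKernel_eq_sum, hx.2.2.2 j hj]
    simp only [shiftDown, sum_add_distrib, sum_sub_distrib]

lemma powerLP_shiftDown {C : Set ℕ} {m : ℕ} (hC : ∀ q ∈ C, m ≤ q ∧ q ≤ Q) (P : ℕ → ℝ) :
    powerLP Q S P (shiftDown C m x) = powerLP Q S P x :=
  weightedSum_shiftDown_of_forall_eq hC P

lemma delayLP_shiftDown {C : Set ℕ} {m : ℕ} (hC : ∀ q ∈ C, m ≤ q ∧ q ≤ Q) :
    delayLP Q S A α (shiftDown C m x) = delayLP Q S A α x
      - m / (A * α) * weightedSum Q S (fun _ _ => 1) (C.indicator x) := by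
  have hsum : weightedSum Q S (fun q _ => (q : ℝ)) (shiftDown C m x) =
      weightedSum Q S (fun q _ => (q : ℝ)) x
        - m * weightedSum Q S (fun _ _ => 1) (C.indicator x) := by
    rw [weightedSum_shiftDown hC (ψ := fun q _ => (q : ℝ) - m) fun q _ => by push_cast; ring]
    simp only [weightedSum, sub_mul, sum_sub_distrib, mul_sum, one_mul]
    ring
  change 1 / ((A : ℝ) * α) * weightedSum Q S (fun q _ => (q : ℝ)) (shiftDown C m x) =
    1 / ((A : ℝ) * α) * weightedSum Q S (fun q _ => (q : ℝ)) x - _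
  rw [hsum]
  ring

lemma weightedSum_one_indicator_pos {C : Set ℕ} (hx0 : ∀ q ≤ Q, ∀ s ≤ S, 0 ≤ x q s) {q s : ℕ}
    (hq : q ∈ C) (hqQ : q ≤ Q) (hs : s ≤ S) (hqs : x q s ≠ 0) :
    0 < weightedSum Q S (fun _ _ => 1) (C.indicator x) := by
  have hterm : ∀ k ≤ Q, ∀ t ≤ S, 0 ≤ (1 : ℝ) * C.indicator x k t := fun k hk t ht => by
    by_cases hk' : k ∈ C <;> simp [hk', hx0 k hk t ht]
  refine sum_pos' (fun k hk => sum_nonneg fun t ht =>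
    hterm k (mem_range_succ_iff.1 hk) t (mem_range_succ_iff.1 ht))
    ⟨q, mem_range_succ_iff.2 hqQ, ?_⟩
  refine sum_pos' (fun t ht => hterm q hqQ t (mem_range_succ_iff.1 ht))
    ⟨s, mem_range_succ_iff.2 hs, ?_⟩
  simpa [hq] using (hx0 q hqQ s hs).lt_of_ne' hqs

lemma delayLP_shiftDown_lt (hA : 1 ≤ A) (hα : 0 < α) {C : Set ℕ} {m : ℕ} (hm : 0 < m)
    (hC : ∀ q ∈ C, m ≤ q ∧ q ≤ Q) (hx0 : ∀ q ≤ Q, ∀ s ≤ S, 0 ≤ x q s) {q s : ℕ} (hq : q ∈ C)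
    (hs : s ≤ S) (hqs : x q s ≠ 0) :
    delayLP Q S A α (shiftDown C m x) < delayLP Q S A α x := by
  have hA' : (1 : ℝ) ≤ A := by exact_mod_cast hA
  have hm' : (0 : ℝ) < m := by exact_mod_cast hm
  rw [delayLP_shiftDown hC, sub_lt_self_iff]
  exact mul_pos (by positivity) (weightedSum_one_indicator_pos hx0 hq (hC q hq).2 hs hqs)

end Shift

section OptimalPolicy

variable {Q S A : ℕ} {α : ℝ} {x f : ℕ → ℕ → ℝ} {pi : ℕ → ℝ}

/-- Shifting the mass on `C` down by `m` would keep the power and lower the delay. -/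
theorem eq_zero_of_isInvariantSet_of_optimal (hA : 1 ≤ A) (hα : 0 < α) {P : ℕ → ℝ} {Pth : ℝ}
    (hx : IsLP Q S A α x) (hxP : powerLP Q S P x ≤ Pth)
    (hxOpt : ∀ y, IsLP Q S A α y → powerLP Q S P y ≤ Pth →
      delayLP Q S A α x ≤ delayLP Q S A α y)
    {C : Set ℕ} {m : ℕ} (hm : 0 < m) (hC : ∀ q ∈ C, m ≤ q ∧ q ≤ Q)
    (hCx : IsInvariantSet Q S A x C) {q s : ℕ} (hq : q ∈ C) (hs : s ≤ S) : x q s = 0 := by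
  by_contra hqs
  exact (delayLP_shiftDown_lt hA hα hm hC hx.1 hq hs hqs).not_ge
    (hxOpt _ (isLP_shiftDown hx hC hCx) ((powerLP_shiftDown hC P).trans_le hxP))

lemma isInvariantSet_image_reach (hf : IsPolicy Q S A f) (hα0 : 0 < α) (hα1 : α < 1)
    (hAQ : A ≤ Q) {M : Matrix (Fin (Q + 1)) (Fin (Q + 1)) ℝ}
    (hM : ∀ i j : Fin (Q + 1), M i j = lam S A α f i j) (hpi : IsStationaryQueue Q S A α f pi)
    (hxf : ∀ q ≤ Q, ∀ s ≤ S, x q s = f q s * pi q) (m : Fin (Q + 1)) :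
    IsInvariantSet Q S A x (Fin.val '' {k | ReflTransGen (0 < M · ·) m k}) := by
  intro q hq s hs hxs
  have hfs : f q s ≠ 0 := fun h => hxs (by rw [hxf q hq s hs, h, zero_mul])
  have hpq : 0 < pi q :=
    (hpi.1 q hq).lt_of_ne fun h => hxs (by rw [hxf q hq s hs, ← h, mul_zero])
  have hsq := le_of_support hf.2.2 hq hs hfs
  have hstoch := hf.mem_rowStochastic hα0.le hα1.le hAQ hM
  let a : Fin (Q + 1) := ⟨q, Nat.lt_succ_of_le hq⟩
  have hstep (t : Fin (Q + 1)) (ht : (t : ℕ) = q - s ∨ (t : ℕ) = q - s + A) :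
      (t : ℕ) ∈ Fin.val '' {k | ReflTransGen (0 < M · ·) m k} ↔
        (a : ℕ) ∈ Fin.val '' {k | ReflTransGen (0 < M · ·) m k} := by
    have hat : 0 < M a t := by rw [hM]; exact hf.lam_pos hα0 hα1 hq hs hfs ht
    have hta := reflTransGen_swap_of_vecMul_eq_self hstoch (fun k => hpi.1 k k.is_le)
      (hpi.vecMul_eq_self hM) (i := a) hpq (.single hat)
    simp only [Fin.val_injective.mem_set_image, Set.mem_ofPred_eq]
    exact ⟨fun h => h.trans hta, fun h => h.tail hat⟩
  exact ⟨hstep ⟨q - s, by omega⟩ (Or.inl rfl),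
    hstep ⟨q - s + A, Nat.lt_succ_of_le (sub_add_le_of_support hf.2.2 hAQ hq hs hfs)⟩ (Or.inr rfl)⟩

/-- Serving `s_m^max = min S m` packets moves the queue below `m` unless `m = 0`. -/
lemma eq_zero_of_forall_reach_le (hS : 1 ≤ S) (hf : IsPolicy Q S A f) (hα0 : 0 < α)
    (hα1 : α < 1) {M : Matrix (Fin (Q + 1)) (Fin (Q + 1)) ℝ}
    (hM : ∀ i j : Fin (Q + 1), M i j = lam S A α f i j) {m : Fin (Q + 1)}
    (hmin : ∀ j, ReflTransGen (0 < M · ·) m j → m ≤ j) (hidle : f m (sHi S m) = 1) : m = 0 := by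
  have hs : sHi S m ≤ S := min_le_left _ _
  have hsm : sHi S m ≤ m := min_le_right _ _
  have hstep : 0 < M m ⟨m - sHi S m, by omega⟩ := by
    rw [hM]
    exact hf.lam_pos hα0 hα1 m.is_le hs (by simp [hidle]) (Or.inl rfl)
  have hle := Fin.le_def.1 (hmin _ (.single hstep))
  simp only [sHi] at hle hsm
  ext
  simp only [Fin.val_zero]
  omega

end OptimalPolicy

theorem optimal_policy_unique_recurrent_class_general
    (Q S A : ℕ) (α : ℝ) (P : ℕ → ℝ)
    (hA : 1 ≤ A) (hAS : A ≤ S) (hSQ : S ≤ Q)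
    (hα0 : 0 < α) (hα1 : α < 1)
    (Pth : ℝ)
    (x : ℕ → ℕ → ℝ) (hx : IsLP Q S A α x)
    (hxP : powerLP Q S P x ≤ Pth)
    (hxOpt : ∀ y, IsLP Q S A α y → powerLP Q S P y ≤ Pth →
      delayLP Q S A α x ≤ delayLP Q S A α y)
    (pi : ℕ → ℝ) (hpi : ∀ q, pi q = ∑ s ∈ range (S + 1), x q s)
    (f : ℕ → ℕ → ℝ)
    (hf : ∀ q s, f q s =
      if 0 < pi q then x q s / pi q else if s = sHi S q then 1 else 0)
    (M : Matrix (Fin (Q + 1)) (Fin (Q + 1)) ℝ)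
    (hM : ∀ i j : Fin (Q + 1), M i j = lam S A α f (i : ℕ) (j : ℕ)) :
    (∃ i : Fin (Q + 1),
      ∀ j : Fin (Q + 1), (∃ n : ℕ, 0 < (M ^ n) i j) → (∃ n : ℕ, 0 < (M ^ n) j i)) ∧
    (∀ i j : Fin (Q + 1),
      (∀ j' : Fin (Q + 1), (∃ n : ℕ, 0 < (M ^ n) i j') → (∃ n : ℕ, 0 < (M ^ n) j' i)) →
      (∀ i' : Fin (Q + 1), (∃ n : ℕ, 0 < (M ^ n) j i') → (∃ n : ℕ, 0 < (M ^ n) i' j)) →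
      ∃ n : ℕ, 0 < (M ^ n) i j) := by
  have hAQ : A ≤ Q := hAS.trans hSQ
  have hpol := hx.isPolicy hAS hpi hf
  have hstat := hx.isStationaryQueue hpi hf
  have hzero (i : Fin (Q + 1)) : ReflTransGen (0 < M · ·) i 0 := by
    obtain ⟨m, him, hmin⟩ := exists_reflTransGen_forall_reflTransGen_le (0 < M · ·) i
    suffices m = 0 from this ▸ him
    by_contra hm
    have hC : ∀ q ∈ Fin.val '' {k | ReflTransGen (0 < M · ·) m k}, (m : ℕ) ≤ q ∧ q ≤ Q := by
      rintro _ ⟨k, hk, rfl⟩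
      exact ⟨hmin k hk, k.is_le⟩
    have hxm (s : ℕ) (hs : s ≤ S) : x m s = 0 :=
      eq_zero_of_isInvariantSet_of_optimal hA hα0 hx hxP hxOpt
        (Nat.pos_of_ne_zero (Fin.val_ne_iff.2 hm)) hC
        (isInvariantSet_image_reach hpol hα0 hα1 hAQ hM hstat
          (fun _ hq _ hs => hx.eq_mul_pi hpi hf hq hs) m) ⟨m, .refl, rfl⟩ hs
    have hpm : ¬ 0 < pi m := by
      rw [hpi, sum_eq_zero fun s hs => hxm s (mem_range_succ_iff.1 hs)]
      exact lt_irrefl 0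
    exact hm (eq_zero_of_forall_reach_le (hA.trans hAS) hpol hα0 hα1 hM hmin
      (by rw [hf, if_neg hpm, if_pos rfl]))
  have hM0 : ∀ i j, 0 ≤ M i j := fun _ _ =>
    nonneg_of_mem_rowStochastic (hpol.mem_rowStochastic hα0.le hα1.le hAQ hM)
  simp only [exists_pow_apply_pos_iff_reflTransGen hM0]
  exact ⟨⟨0, fun j _ => hzero j⟩, fun i j _ hj => (hzero i).trans (hj 0 (hzero j))⟩

/-- The queue-length Markov chain of the optimal variable-length coding
policy (derived from a delay-optimal LP point under power budget `Pth`) has exactly one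
recurrent closed class: recurrent states exist, and any two recurrent states communicate.
Here `i ⇝ j` iff `(M^n) i j > 0` for some `n ≥ 0`, and `i` is recurrent iff every state
it reaches, reaches it back. -/
theorem optimal_policy_unique_recurrent_class
    (Q S A : ℕ) (α : ℝ) (P : ℕ → ℝ)
    (hA : 1 ≤ A) (hAS : A ≤ S) (hSQ : S ≤ Q)
    (hα0 : 0 < α) (hα1 : α < 1)
    (hP : ∀ s ≤ S, 0 ≤ P s)
    (Pth : ℝ)
    (x : ℕ → ℕ → ℝ) (hx : IsLP Q S A α x)
    (hxP : powerLP Q S P x ≤ Pth)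
    (hxOpt : ∀ y, IsLP Q S A α y → powerLP Q S P y ≤ Pth →
      delayLP Q S A α x ≤ delayLP Q S A α y)
    (pi : ℕ → ℝ) (hpi : ∀ q, pi q = ∑ s ∈ range (S + 1), x q s)
    (f : ℕ → ℕ → ℝ)
    (hf : ∀ q s, f q s =
      if 0 < pi q then x q s / pi q else if s = sHi S q then 1 else 0)
    (M : Matrix (Fin (Q + 1)) (Fin (Q + 1)) ℝ)
    (hM : ∀ i j : Fin (Q + 1), M i j = lam S A α f (i : ℕ) (j : ℕ)) :
    (∃ i : Fin (Q + 1),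
      ∀ j : Fin (Q + 1), (∃ n : ℕ, 0 < (M ^ n) i j) → (∃ n : ℕ, 0 < (M ^ n) j i)) ∧
    (∀ i j : Fin (Q + 1),
      (∀ j' : Fin (Q + 1), (∃ n : ℕ, 0 < (M ^ n) i j') → (∃ n : ℕ, 0 < (M ^ n) j' i)) →
      (∀ i' : Fin (Q + 1), (∃ n : ℕ, 0 < (M ^ n) j i') → (∃ n : ℕ, 0 < (M ^ n) i' j)) →
      ∃ n : ℕ, 0 < (M ^ n) i j) :=
  optimal_policy_unique_recurrent_class_general Q S A α P hA hAS hSQ hα0 hα1 Pth x hx hxP hxOpt pi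
    hpi f hf M hM
end
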